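/- arXiv:2311.05285 — 10 statements merged into one kernel-verified Lean document; each statement's English description precedes it below -/
import Mathlib

section
/- Let X be a set and V a collection of subsets of X that is independent (meaning no member of V is a finite union of other members of V unless it equals one of them) and finitely aligned (meaning the intersection of any two members of V is a finite, possibly empty, disjoint union of members of V). Then for any finite family of members of V, their intersection decomposes uniquely as a finite disjoint union of members of V: if ⋃_{i=1}^m W_i = ⋃_{j=1}^n W'_j are two decompositions into pairwise disjoint nonempty members of V, then {W_1,…,W_m} = {W'_1,…,W'_n}. -/
/-- A family `V` of subsets of `X` is *independent* if whenever a member of `V`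
equals a finite union of members of `V`, it equals one of them. -/
def IndependentFamily {X : Type*} (V : Set (Set X)) : Prop :=
  ∀ (A : Set X) (S : Finset (Set X)), A ∈ V → (↑S : Set (Set X)) ⊆ V →
    A = ⋃₀ ↑S → A ∈ S

/-- A family `V` of subsets of `X` is *finitely aligned* if the intersection of any two
members of `V` is a finite (possibly empty) disjoint union of members of `V`. -/
def FinitelyAlignedFamily {X : Type*} (V : Set (Set X)) : Prop :=
  ∀ A ∈ V, ∀ B ∈ V, ∃ S : Finset (Set X), (↑S : Set (Set X)) ⊆ V ∧
    (↑S : Set (Set X)).PairwiseDisjoint id ∧ A ∩ B = ⋃₀ ↑S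

open Classical in
lemma aux_cover {X : Type*} (V : Set (Set X))
    (hind : IndependentFamily V) (hfa : FinitelyAlignedFamily V)
    (A : Set X) (hA : A ∈ V) (S' : Finset (Set X)) (hS' : (↑S' : Set (Set X)) ⊆ V)
    (hsub : A ⊆ ⋃₀ ↑S') : ∃ B ∈ S', A ⊆ B := by
  have hch : ∀ b : {x // x ∈ S'}, ∃ T : Finset (Set X),
      (↑T : Set (Set X)) ⊆ V ∧ (↑T : Set (Set X)).PairwiseDisjoint id ∧
      A ∩ b.1 = ⋃₀ ↑T := fun b => hfa A hA b.1 (hS' b.2)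
  choose T hTV _ hTU using hch
  set U : Finset (Set X) := S'.attach.biUnion T with hU
  have hUV : (↑U : Set (Set X)) ⊆ V := by
    intro t ht
    simp only [hU, Finset.coe_biUnion, Finset.mem_coe, Finset.mem_attach,
      Set.iUnion_true, Set.mem_iUnion] at ht
    obtain ⟨b, hb⟩ := ht
    exact hTV b hb
  have hAeq : A = ⋃₀ ↑U := by
    ext x
    constructor
    · intro hx
      obtain ⟨b, hb, hxb⟩ := hsub hx
      have : x ∈ ⋃₀ ↑(T ⟨b, hb⟩) := by
        rw [← hTU ⟨b, hb⟩]; exact ⟨hx, hxb⟩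
      obtain ⟨t, ht, hxt⟩ := this
      exact ⟨t, by
        simp only [hU, Finset.coe_biUnion, Finset.mem_coe, Finset.mem_attach,
          Set.iUnion_true, Set.mem_iUnion]
        exact ⟨⟨b, hb⟩, ht⟩, hxt⟩
    · intro hx
      obtain ⟨t, ht, hxt⟩ := hx
      simp only [hU, Finset.coe_biUnion, Finset.mem_coe, Finset.mem_attach,
        Set.iUnion_true, Set.mem_iUnion] at ht
      obtain ⟨b, hb⟩ := ht
      have : x ∈ ⋃₀ ↑(T b) := ⟨t, hb, hxt⟩
      rw [← hTU b] at this
      exact this.1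
  have hAU : A ∈ U := hind A U hA hUV hAeq
  simp only [hU, Finset.mem_biUnion, Finset.mem_attach, true_and] at hAU
  obtain ⟨b, hb⟩ := hAU
  refine ⟨b.1, b.2, ?_⟩
  have : A ⊆ ⋃₀ ↑(T b) := Set.subset_sUnion_of_mem hb
  rw [← hTU b] at this
  exact fun x hx => (this hx).2

/-- Uniqueness of decompositions of finite intersections of members of an independent,
finitely aligned family as finite disjoint unions of nonempty members. -/
theorem stmt0 {X : Type*} (V : Set (Set X))
    (hind : IndependentFamily V) (hfa : FinitelyAlignedFamily V)
    (F : Finset (Set X)) (hF : (↑F : Set (Set X)) ⊆ V)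
    (S S' : Finset (Set X))
    (hS : (↑S : Set (Set X)) ⊆ V) (hS' : (↑S' : Set (Set X)) ⊆ V)
    (hSne : ∀ A ∈ S, (A : Set X).Nonempty) (hS'ne : ∀ A ∈ S', (A : Set X).Nonempty)
    (hSd : (↑S : Set (Set X)).PairwiseDisjoint id)
    (hS'd : (↑S' : Set (Set X)).PairwiseDisjoint id)
    (h1 : ⋂₀ (↑F : Set (Set X)) = ⋃₀ ↑S) (h2 : ⋂₀ (↑F : Set (Set X)) = ⋃₀ ↑S') :
    S = S' := by
  have key : ∀ (S₁ S₂ : Finset (Set X)), (↑S₁ : Set (Set X)) ⊆ V →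
      (↑S₂ : Set (Set X)) ⊆ V → (∀ A ∈ S₁, (A : Set X).Nonempty) →
      (↑S₁ : Set (Set X)).PairwiseDisjoint id → ⋃₀ (↑S₁ : Set (Set X)) = ⋃₀ ↑S₂ →
      S₁ ⊆ S₂ := by
    intro S₁ S₂ hS₁ hS₂ hne₁ hd₁ heq
    intro A hA
    have hAsub : A ⊆ ⋃₀ ↑S₂ := heq ▸ Set.subset_sUnion_of_mem hA
    obtain ⟨B, hB, hAB⟩ := aux_cover V hind hfa A (hS₁ hA) S₂ hS₂ hAsub
    have hBsub : B ⊆ ⋃₀ ↑S₁ := heq ▸ Set.subset_sUnion_of_mem hB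
    obtain ⟨A', hA', hBA'⟩ := aux_cover V hind hfa B (hS₂ hB) S₁ hS₁ hBsub
    have hAA' : A = A' := by
      by_contra hne
      have := hd₁ hA hA' hne
      obtain ⟨x, hx⟩ := hne₁ A hA
      exact Set.disjoint_left.mp this hx (hBA' (hAB hx))
    have : A = B := le_antisymm hAB (hAA' ▸ hBA')
    exact this ▸ hB
  have heq : ⋃₀ (↑S : Set (Set X)) = ⋃₀ ↑S' := h1 ▸ h2
  exact le_antisymm (key S S' hS hS' hSne hSd heq)
    (key S' S hS' hS hS'ne hS'd heq.symm)
end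

section
/- Let {e_1, …, e_n} be a finite set of commuting projections in a C*-algebra, and set e'_i := e_i − ⋁_{e_j < e_i} e_j. Suppose {e'_1, …, e'_n} is a family of nonzero pairwise orthogonal projections linearly spanning the C*-algebra D generated by the e_i. Then for any indices a, i one has e'_a ≤ e_i if and only if e_a ≤ e_i. -/
/-!
Write `e'_a = e_a ∏_{e_j < e_a} (1 - e_j)`. Since `e_i e'_k` is an idempotent of `D`, hence a
combination of the orthogonal idempotents `e'_m` that is absorbed by `e'_k`, it is a scalar
multiple of `e'_k`, so it is either `0` or `e'_k`. Now suppose `e'_k ≤ e_a` with `k ≠ a`. As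
`e'_k e'_a = 0`, the idempotent `e'_k` is killed by `∏_{e_j < e_a} (1 - e_j)`, so it cannot be
orthogonal to every `e_j < e_a`: hence `e'_k ≤ e_j` for some `e_j < e_a`. Induction along the
well-founded order `<` on the finitely many `e_j` then gives `e_k ≤ e_j ≤ e_a`.
-/

open scoped Classical

/-- `p ≤ q` for projections: `p * q = p`. -/
def pLe {A : Type*} [Mul A] (p q : A) : Prop := p * q = p

/-- `p < q` for projections: `p * q = p` and `p ≠ q`. -/
def pLt {A : Type*} [Mul A] (p q : A) : Prop := p * q = p ∧ p ≠ q

/-- The join `⋁_{j ∈ S} e j` of a finite family of commuting projections,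
computed as `1 - ∏_{j ∈ S} (1 - e j)`. -/
noncomputable def pJoin {A : Type*} [Ring A] {n : ℕ} (e : Fin n → A) (S : Finset (Fin n)) : A :=
  1 - ((S.sort (· ≤ ·)).map fun j => (1 - e j)).prod

/-- `e'_i := e_i - ⋁_{e_j < e_i} e_j`. -/
noncomputable def eprime {A : Type*} [Ring A] {n : ℕ} (e : Fin n → A) (i : Fin n) : A :=
  e i - pJoin e (Finset.univ.filter fun j => pLt (e j) (e i))

open Finset

section Order

variable {M : Type*} [Semigroup M]

theorem pLe_trans {p q r : M} (hpq : pLe p q) (hqr : pLe q r) : pLe p r := by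
  unfold pLe at *
  rw [← hpq, mul_assoc, hqr]

theorem wellFounded_pLt {ι : Type*} [Finite ι] {e : ι → M}
    (hcomm : ∀ i j, Commute (e i) (e j)) : WellFounded fun i j => pLt (e i) (e j) := by
  have : IsTrans ι fun i j => pLt (e i) (e j) := by
    refine ⟨fun i j k hij hjk => ⟨pLe_trans hij.1 hjk.1, fun hik => hij.2 ?_⟩⟩
    have hkj : e k * e j = e k := by rw [← hik]; exact hij.1
    rw [hik, ← hkj, ← (hcomm j k).eq, hjk.1]
  have : Std.Irrefl fun i j => pLt (e i) (e j) := ⟨fun i hi => hi.2 rfl⟩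
  exact Finite.wellFounded_of_trans_of_irrefl _

end Order

section ListProd

variable {M : Type*} [Monoid M]

theorem mul_list_prod_eq_self {x : M} {l : List M} (h : ∀ y ∈ l, x * y = x) :
    x * l.prod = x := by
  induction l with
  | nil => simp
  | cons y l ih =>
    rw [List.prod_cons, ← mul_assoc, h y List.mem_cons_self,
      ih fun z hz => h z (List.mem_cons_of_mem _ hz)]

theorem isIdempotentElem_list_prod {l : List M} (hcomm : ∀ x ∈ l, ∀ y ∈ l, Commute x y)
    (hidem : ∀ x ∈ l, IsIdempotentElem x) : IsIdempotentElem l.prod := by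
  induction l with
  | nil => exact IsIdempotentElem.one
  | cons y l ih =>
    rw [List.prod_cons]
    refine IsIdempotentElem.mul_of_commute ?_ (hidem y List.mem_cons_self) ?_
    · exact Commute.list_prod_right _ _ fun z hz =>
        hcomm y List.mem_cons_self z (List.mem_cons_of_mem _ hz)
    · exact ih (fun x hx y hy => hcomm x (List.mem_cons_of_mem _ hx) y (List.mem_cons_of_mem _ hy))
        fun x hx => hidem x (List.mem_cons_of_mem _ hx)

end ListProd

theorem OrthogonalIdempotents.eq_zero_or_eq_of_mem_span {K A ι : Type*} [Field K] [Ring A]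
    [Algebra K A] [Fintype ι] {f : ι → A} (hf : OrthogonalIdempotents f) (hne : ∀ i, f i ≠ 0)
    {x : A} (hx : x ∈ Submodule.span K (Set.range f)) (hxidem : IsIdempotentElem x) {k : ι}
    (hxk : x * f k = x) : x = 0 ∨ x = f k := by
  obtain ⟨c, rfl⟩ := Submodule.mem_span_range_iff_exists_fun K |>.mp hx
  have hsmul : ∑ i, c i • f i = c k • f k := by
    rw [← hxk, Finset.sum_mul, Finset.sum_eq_single k]
    · rw [smul_mul_assoc, (hf.idem k).eq]
    · intro i _ hik
      rw [smul_mul_assoc, hf.ortho hik, smul_zero]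
    · simp
  rw [hsmul] at hxidem ⊢
  have hc : IsIdempotentElem (c k) := by
    apply smul_left_injective K (hne k)
    simpa only [IsIdempotentElem, smul_mul_smul_comm, (hf.idem k).eq] using hxidem
  rcases IsIdempotentElem.iff_eq_zero_or_one.mp hc with h | h <;> simp [h]

section Eprime

variable {A : Type*} [Ring A] {n : ℕ} {e : Fin n → A}

noncomputable def pJoinCompl (e : Fin n → A) (S : Finset (Fin n)) : A :=
  ((S.sort (· ≤ ·)).map fun j => 1 - e j).prod

noncomputable def pLtIdx (e : Fin n → A) (a : Fin n) : Finset (Fin n) :=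
  univ.filter fun j => pLt (e j) (e a)

theorem mem_pLtIdx {a j : Fin n} : j ∈ pLtIdx e a ↔ pLt (e j) (e a) := by
  simp [pLtIdx]

theorem commute_pJoinCompl {x : A} {S : Finset (Fin n)} (h : ∀ j ∈ S, Commute x (e j)) :
    Commute x (pJoinCompl e S) := by
  refine Commute.list_prod_right _ _ fun y hy => ?_
  obtain ⟨j, hj, rfl⟩ := List.mem_map.mp hy
  exact (Commute.one_right x).sub_right (h j ((mem_sort _).mp hj))

theorem mul_pJoinCompl_of_mul_eq_zero {x : A} {S : Finset (Fin n)} (h : ∀ j ∈ S, x * e j = 0) :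
    x * pJoinCompl e S = x := by
  refine mul_list_prod_eq_self fun y hy => ?_
  obtain ⟨j, hj, rfl⟩ := List.mem_map.mp hy
  rw [mul_sub, mul_one, h j ((mem_sort _).mp hj), sub_zero]

theorem isIdempotentElem_pJoinCompl (hidem : ∀ i, IsIdempotentElem (e i))
    (hcomm : ∀ i j, Commute (e i) (e j)) (S : Finset (Fin n)) :
    IsIdempotentElem (pJoinCompl e S) := by
  refine isIdempotentElem_list_prod ?_ ?_ <;> simp only [List.mem_map, forall_exists_index, and_imp]
  · rintro _ i - rfl _ j - rfl
    exact (Commute.one_left _).sub_left ((Commute.one_right _).sub_right (hcomm i j))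
  · rintro _ i - rfl
    exact (hidem i).one_sub

theorem eprime_eq_mul_pJoinCompl (hcomm : ∀ i j, Commute (e i) (e j)) (a : Fin n) :
    eprime e a = e a * pJoinCompl e (pLtIdx e a) := by
  have hcompl : (1 - e a) * pJoinCompl e (pLtIdx e a) = 1 - e a := by
    refine mul_pJoinCompl_of_mul_eq_zero fun j hj => ?_
    rw [sub_mul, one_mul, (hcomm a j).eq, (mem_pLtIdx.mp hj).1, sub_self]
  rw [sub_mul, one_mul] at hcompl
  calc eprime e a = pJoinCompl e (pLtIdx e a) - (1 - e a) := by unfold eprime pJoin; abel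
    _ = e a * pJoinCompl e (pLtIdx e a) := by rw [← hcompl]; abel

theorem commute_eprime (hcomm : ∀ i j, Commute (e i) (e j)) (i k : Fin n) :
    Commute (e i) (eprime e k) := by
  rw [eprime_eq_mul_pJoinCompl hcomm]
  exact (hcomm i k).mul_right (commute_pJoinCompl fun j _ => hcomm i j)

theorem isIdempotentElem_eprime (hidem : ∀ i, IsIdempotentElem (e i))
    (hcomm : ∀ i j, Commute (e i) (e j)) (a : Fin n) : IsIdempotentElem (eprime e a) := by
  rw [eprime_eq_mul_pJoinCompl hcomm]
  exact (hidem a).mul_of_commute (commute_pJoinCompl fun j _ => hcomm a j)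
    (isIdempotentElem_pJoinCompl hidem hcomm _)

theorem pLe_eprime_of_pLe (hcomm : ∀ i j, Commute (e i) (e j)) {a i : Fin n}
    (h : pLe (e a) (e i)) : pLe (eprime e a) (e i) := by
  unfold pLe at *
  rw [eprime_eq_mul_pJoinCompl hcomm, mul_assoc,
    ← (commute_pJoinCompl fun j _ => hcomm i j).eq, ← mul_assoc, h]

end Eprime

section Spanning

variable {K A : Type*} [Field K] [Ring A] [Algebra K A] {n : ℕ} {e : Fin n → A}

theorem eprime_mem_adjoin (k : Fin n) : eprime e k ∈ Algebra.adjoin K (Set.range e) := by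
  have he : ∀ j, e j ∈ Algebra.adjoin K (Set.range e) := fun j => Algebra.subset_adjoin ⟨j, rfl⟩
  refine sub_mem (he k) (sub_mem (one_mem _) (list_prod_mem fun x hx => ?_))
  obtain ⟨j, -, rfl⟩ := List.mem_map.mp hx
  exact sub_mem (one_mem _) (he j)

theorem eprime_mul_eq_zero_or_pLe (hidem : ∀ i, IsIdempotentElem (e i))
    (hcomm : ∀ i j, Commute (e i) (e j)) (hne : ∀ i, eprime e i ≠ 0)
    (horth : ∀ i j, i ≠ j → eprime e i * eprime e j = 0)
    (hspan : Subalgebra.toSubmodule (Algebra.adjoin K (Set.range e)) ≤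
      Submodule.span K (Set.range (eprime e)))
    (k j : Fin n) : eprime e k * e j = 0 ∨ pLe (eprime e k) (e j) := by
  have hidem' := isIdempotentElem_eprime hidem hcomm
  have hcomm' := (commute_eprime hcomm j k).eq
  refine OrthogonalIdempotents.eq_zero_or_eq_of_mem_span ⟨hidem', fun i j => horth i j⟩ hne
    (hspan (mul_mem (eprime_mem_adjoin k) (Algebra.subset_adjoin ⟨j, rfl⟩) :
      eprime e k * e j ∈ Algebra.adjoin K (Set.range e)))
    ((hidem' k).mul_of_commute hcomm'.symm (hidem j)) ?_
  rw [mul_assoc, hcomm', ← mul_assoc, (hidem' k).eq]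

theorem exists_pLt_pLe_of_pLe_eprime (hidem : ∀ i, IsIdempotentElem (e i))
    (hcomm : ∀ i j, Commute (e i) (e j)) (hne : ∀ i, eprime e i ≠ 0)
    (horth : ∀ i j, i ≠ j → eprime e i * eprime e j = 0)
    (hspan : Subalgebra.toSubmodule (Algebra.adjoin K (Set.range e)) ≤
      Submodule.span K (Set.range (eprime e)))
    {k a : Fin n} (hka : k ≠ a) (hk : pLe (eprime e k) (e a)) :
    ∃ j, pLt (e j) (e a) ∧ pLe (eprime e k) (e j) := by
  by_contra! hnone
  have hkill : eprime e k * pJoinCompl e (pLtIdx e a) = eprime e k :=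
    mul_pJoinCompl_of_mul_eq_zero fun j hj =>
      (eprime_mul_eq_zero_or_pLe hidem hcomm hne horth hspan k j).resolve_right
        (hnone j (mem_pLtIdx.mp hj))
  apply hne k
  calc eprime e k = eprime e k * eprime e a := by
        rw [eprime_eq_mul_pJoinCompl hcomm a, ← mul_assoc, hk, hkill]
    _ = 0 := horth k a hka

theorem pLe_of_pLe_eprime (hidem : ∀ i, IsIdempotentElem (e i))
    (hcomm : ∀ i j, Commute (e i) (e j)) (hne : ∀ i, eprime e i ≠ 0)
    (horth : ∀ i j, i ≠ j → eprime e i * eprime e j = 0)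
    (hspan : Subalgebra.toSubmodule (Algebra.adjoin K (Set.range e)) ≤
      Submodule.span K (Set.range (eprime e)))
    {k a : Fin n} (h : pLe (eprime e k) (e a)) : pLe (e k) (e a) := by
  induction a using (wellFounded_pLt hcomm).induction with
  | h a ih =>
    obtain rfl | hka := eq_or_ne k a
    · exact (hidem k).eq
    obtain ⟨j, hja, hkj⟩ := exists_pLt_pLe_of_pLe_eprime hidem hcomm hne horth hspan hka h
    exact pLe_trans (ih j hja hkj) hja.1

end Spanning

theorem stmt2_general {A : Type*} [NormedRing A] [StarRing A]
    [NormedAlgebra ℂ A]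
    {n : ℕ} (e : Fin n → A)
    (hproj : ∀ i, e i * e i = e i ∧ star (e i) = e i)
    (hcomm : ∀ i j, e i * e j = e j * e i)
    (hne : ∀ i, eprime e i ≠ 0)
    (horth : ∀ i j, i ≠ j → eprime e i * eprime e j = 0)
    (hspan : Subalgebra.toSubmodule (Algebra.adjoin ℂ (Set.range e)) ≤
      Submodule.span ℂ (Set.range (eprime e))) :
    ∀ a i, pLe (eprime e a) (e i) ↔ pLe (e a) (e i) := fun _ _ =>
  ⟨pLe_of_pLe_eprime (fun i => (hproj i).1) hcomm hne horth hspan, pLe_eprime_of_pLe hcomm⟩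

/-- If the `e'_i` are nonzero, pairwise orthogonal and linearly span the C*-algebra `D`
generated by the commuting projections `e_i`, then `e'_a ≤ e_i ↔ e_a ≤ e_i`. -/
theorem stmt2 {A : Type*} [NormedRing A] [StarRing A] [CStarRing A]
    [NormedAlgebra ℂ A] [StarModule ℂ A] [CompleteSpace A]
    {n : ℕ} (e : Fin n → A)
    (hproj : ∀ i, e i * e i = e i ∧ star (e i) = e i)
    (hcomm : ∀ i j, e i * e j = e j * e i)
    (hne : ∀ i, eprime e i ≠ 0)
    (horth : ∀ i j, i ≠ j → eprime e i * eprime e j = 0)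
    (hspan : Subalgebra.toSubmodule (Algebra.adjoin ℂ (Set.range e)) ≤
      Submodule.span ℂ (Set.range (eprime e))) :
    ∀ a i, pLe (eprime e a) (e i) ↔ pLe (e a) (e i) :=
  stmt2_general e hproj hcomm hne horth hspan
end

section
/- Let E be a row-finite, finitely aligned multitree with no sources. For any two vertices v, w ∈ E^0, the intersection of cylinder sets satisfies Z(v) ∩ Z(w) = ⨆_{u ∈ v∨w} Z(u), a disjoint union over the set v∨w of minimal common upper bounds of v and w. -/
/-- A directed graph: vertices, edges, and range/source maps. -/
structure DirGraph where
  V : Type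
  E : Type
  r : E → V
  s : E → V

namespace DirGraph

/-- `G.IsDPath v w p` : `p` is a directed path from `w` to `v`, i.e. a (possibly empty)
composable sequence of edges with range `v` and source `w`. -/
def IsDPath (G : DirGraph) : G.V → G.V → List G.E → Prop
  | v, w, [] => v = w
  | v, w, e :: p => G.r e = v ∧ G.IsDPath (G.s e) w p

/-- The relation `v ≤ w` : there is a directed path from `w` to `v`. -/
def Le (G : DirGraph) (v w : G.V) : Prop := ∃ p, G.IsDPath v w p

/-- A multitree: there is at most one directed path between any two vertices. -/
def IsMultitree (G : DirGraph) : Prop :=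
  ∀ v w p q, G.IsDPath v w p → G.IsDPath v w q → p = q

/-- Row-finite: every vertex receives finitely many edges. -/
def RowFinite (G : DirGraph) : Prop := ∀ v, {e : G.E | G.r e = v}.Finite

/-- No sources: every vertex receives at least one edge. -/
def NoSources (G : DirGraph) : Prop := ∀ v, ∃ e, G.r e = v

/-- The set of minimal common upper bounds of `v` and `w`. -/
def mub (G : DirGraph) (v w : G.V) : Set G.V :=
  {u | G.Le v u ∧ G.Le w u ∧ ∀ u', G.Le v u' → G.Le w u' → G.Le u' u → u' = u}

/-- Finitely aligned: any two vertices have finitely many minimal common upper bounds. -/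
def FinAligned (G : DirGraph) : Prop := ∀ v w, (G.mub v w).Finite

/-- Infinite (directed) paths in `G`. -/
def InfPath (G : DirGraph) := {l : ℕ → G.E // ∀ n, G.s (l n) = G.r (l (n + 1))}

/-- Shift-tail equivalence of infinite paths. -/
def stEquiv (G : DirGraph) (a b : G.InfPath) : Prop :=
  ∃ m n : ℕ, ∀ k, a.1 (m + k) = b.1 (n + k)

/-- The boundary `∂G`: shift-tail equivalence classes of infinite paths. -/
def Bdry (G : DirGraph) := Quot G.stEquiv

/-- The cylinder set `Z_∂(v) ⊆ ∂G` of boundary classes of infinite paths with range `v`. -/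
def Zb (G : DirGraph) (v : G.V) : Set G.Bdry :=
  {x | ∃ l : G.InfPath, G.r (l.1 0) = v ∧ Quot.mk G.stEquiv l = x}

/-- The cylinder-set topology on the boundary `∂G`. -/
def bdryTop (G : DirGraph) : TopologicalSpace G.Bdry :=
  TopologicalSpace.generateFrom {S | ∃ v, S = G.Zb v}

/-- The cylinder set `Z(v) ⊆ Ω = G.V ⊕ ∂G`: vertices `w` with a path from `w` to `v`,
together with boundary classes of infinite paths through `v`. -/
def Zfull (G : DirGraph) (v : G.V) : Set (G.V ⊕ G.Bdry) :=
  {x | Sum.elim (fun w => G.Le v w) (fun b => b ∈ G.Zb v) x}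

end DirGraph

namespace DirGraph

variable {G : DirGraph}

theorem isDPath_append {a b c : G.V} {p q : List G.E}
    (hp : G.IsDPath a b p) (hq : G.IsDPath b c q) : G.IsDPath a c (p ++ q) := by
  induction p generalizing a with
  | nil => cases hp; exact hq
  | cons e p ih => exact ⟨hp.1, ih hp.2⟩

theorem le_refl' (a : G.V) : G.Le a a := ⟨[], rfl⟩

theorem le_trans' {a b c : G.V} (h1 : G.Le a b) (h2 : G.Le b c) : G.Le a c := by
  obtain ⟨p, hp⟩ := h1; obtain ⟨q, hq⟩ := h2
  exact ⟨p ++ q, isDPath_append hp hq⟩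

theorem isDPath_src_unique {a b c : G.V} {p : List G.E}
    (hb : G.IsDPath a b p) (hc : G.IsDPath a c p) : b = c := by
  induction p generalizing a with
  | nil => exact hb.symm.trans hc
  | cons e p ih => exact ih hb.2 hc.2

theorem isDPath_split {a c : G.V} {p q : List G.E}
    (h : G.IsDPath a c (p ++ q)) : ∃ b, G.IsDPath a b p ∧ G.IsDPath b c q := by
  induction p generalizing a with
  | nil => exact ⟨a, rfl, h⟩
  | cons e p ih =>
    obtain ⟨b, h1, h2⟩ := ih h.2
    exact ⟨b, ⟨h.1, h1⟩, h2⟩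

theorem le_antisymm' (hmt : G.IsMultitree) {a b : G.V}
    (h1 : G.Le a b) (h2 : G.Le b a) : a = b := by
  obtain ⟨p, hp⟩ := h1; obtain ⟨q, hq⟩ := h2
  have h3 : G.IsDPath a a (p ++ q) := isDPath_append hp hq
  have h4 : p ++ q = [] := hmt a a (p ++ q) [] h3 rfl
  have hp0 : p = [] := by
    cases p with
    | nil => rfl
    | cons e p => simp at h4
  subst hp0
  exact hp

/-- In a multitree, two vertices with a common lower bound and a common upper bound
are comparable. -/
theorem comparable (hmt : G.IsMultitree) {v u₁ u₂ x : G.V}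
    (h1 : G.Le v u₁) (h2 : G.Le v u₂) (hx1 : G.Le u₁ x) (hx2 : G.Le u₂ x) :
    G.Le u₁ u₂ ∨ G.Le u₂ u₁ := by
  obtain ⟨p₁, hp₁⟩ := h1; obtain ⟨p₂, hp₂⟩ := h2
  obtain ⟨q₁, hq₁⟩ := hx1; obtain ⟨q₂, hq₂⟩ := hx2
  have he : p₁ ++ q₁ = p₂ ++ q₂ :=
    hmt v x _ _ (isDPath_append hp₁ hq₁) (isDPath_append hp₂ hq₂)
  have hpre1 : p₁ <+: p₂ ++ q₂ := he ▸ ⟨q₁, rfl⟩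
  have hpre2 : p₂ <+: p₂ ++ q₂ := ⟨q₂, rfl⟩
  rcases List.prefix_or_prefix_of_prefix hpre1 hpre2 with h | h
  · obtain ⟨t, ht⟩ := h
    subst ht
    obtain ⟨b, hb1, hb2⟩ := isDPath_split hp₂
    have : b = u₁ := isDPath_src_unique hb1 hp₁
    subst this
    exact Or.inl ⟨t, hb2⟩
  · obtain ⟨t, ht⟩ := h
    subst ht
    obtain ⟨b, hb1, hb2⟩ := isDPath_split hp₁
    have : b = u₂ := isDPath_src_unique hb1 hp₂
    subst this
    exact Or.inr ⟨t, hb2⟩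

theorem exists_mub_le_aux (hmt : G.IsMultitree) (v w : G.V) :
    ∀ n (x : G.V) (p : List G.E), G.IsDPath v x p → p.length ≤ n → G.Le w x →
      ∃ u ∈ G.mub v w, G.Le u x := by
  intro n
  induction n with
  | zero =>
    intro x p hp hlen hw
    by_cases hx : ∀ u', G.Le v u' → G.Le w u' → G.Le u' x → u' = x
    · exact ⟨x, ⟨⟨p, hp⟩, hw, hx⟩, le_refl' x⟩
    · push_neg at hx
      obtain ⟨u', hvu', hwu', hu'x, hne⟩ := hx
      obtain ⟨q', hq'⟩ := hu'x
      obtain ⟨r', hr'⟩ := hvu'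
      have he : r' ++ q' = p := hmt v x _ _ (isDPath_append hr' hq') hp
      have hq'ne : q' ≠ [] := by
        intro h; subst h; exact hne hq'
      have : 1 ≤ q'.length := by
        cases q' with
        | nil => exact absurd rfl hq'ne
        | cons a l => simp
      have : p.length = r'.length + q'.length := by rw [← he]; simp
      omega
  | succ n ih =>
    intro x p hp hlen hw
    by_cases hx : ∀ u', G.Le v u' → G.Le w u' → G.Le u' x → u' = x
    · exact ⟨x, ⟨⟨p, hp⟩, hw, hx⟩, le_refl' x⟩
    · push_neg at hx
      obtain ⟨u', hvu', hwu', hu'x, hne⟩ := hx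
      obtain ⟨q', hq'⟩ := hu'x
      obtain ⟨r', hr'⟩ := hvu'
      have he : r' ++ q' = p := hmt v x _ _ (isDPath_append hr' hq') hp
      have hq'ne : q' ≠ [] := by
        intro h; subst h; exact hne hq'
      have h1 : 1 ≤ q'.length := by
        cases q' with
        | nil => exact absurd rfl hq'ne
        | cons a l => simp
      have h2 : p.length = r'.length + q'.length := by rw [← he]; simp
      obtain ⟨u, hu, hule⟩ := ih u' r' hr' (by omega) hwu'
      exact ⟨u, hu, le_trans' hule ⟨q', hq'⟩⟩

theorem exists_mub_le (hmt : G.IsMultitree) {v w x : G.V}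
    (hv : G.Le v x) (hw : G.Le w x) : ∃ u ∈ G.mub v w, G.Le u x := by
  obtain ⟨p, hp⟩ := hv
  exact exists_mub_le_aux hmt v w p.length x p hp le_rfl hw

theorem zb_mono_aux : ∀ (p : List G.E) (v u : G.V), G.IsDPath v u p →
    G.Zb u ⊆ G.Zb v := by
  intro p
  induction p with
  | nil =>
    intro v u hp
    cases hp
    exact subset_rfl
  | cons e p ih =>
    intro v u hp x hx
    obtain ⟨l, hl0, hlx⟩ := ih (G.s e) u hp.2 hx
    refine ⟨⟨fun n => Nat.casesOn n e (fun m => l.1 m), ?_⟩, ?_, ?_⟩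
    · intro n
      cases n with
      | zero => exact hl0.symm
      | succ m => exact l.2 m
    · exact hp.1
    · rw [← hlx]
      exact Quot.sound ⟨1, 0, fun k => by rw [Nat.add_comm 1 k, Nat.zero_add]⟩

theorem zb_mono {v u : G.V} (h : G.Le v u) : G.Zb u ⊆ G.Zb v := by
  obtain ⟨p, hp⟩ := h
  exact zb_mono_aux p v u hp

theorem zfull_mono {v u : G.V} (h : G.Le v u) : G.Zfull u ⊆ G.Zfull v := by
  intro x hx
  cases x with
  | inl a => exact le_trans' h hx
  | inr b => exact zb_mono h hx

theorem le_infPath (l : G.InfPath) (m : ℕ) : G.Le (G.r (l.1 0)) (G.r (l.1 m)) := by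
  induction m with
  | zero => exact le_refl' _
  | succ m ih =>
    exact le_trans' ih ⟨[l.1 m], rfl, l.2 m⟩

theorem stEquiv_equivalence : Equivalence G.stEquiv := by
  constructor
  · intro a; exact ⟨0, 0, fun _ => rfl⟩
  · rintro a b ⟨m, n, h⟩; exact ⟨n, m, fun k => (h k).symm⟩
  · rintro a b c ⟨m, n, h⟩ ⟨m', n', h'⟩
    refine ⟨m + (max n m' - n), n' + (max n m' - m'), fun k => ?_⟩
    have h1 := h ((max n m' - n) + k)
    have h2 := h' ((max n m' - m') + k)
    have e1 : m + (max n m' - n) + k = m + ((max n m' - n) + k) := by omega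
    have e2 : n + ((max n m' - n) + k) = m' + ((max n m' - m') + k) := by omega
    have e3 : n' + ((max n m' - m') + k) = n' + (max n m' - m') + k := by omega
    rw [e1, h1, e2, h2, e3]

theorem stEquiv_of_mk_eq {a b : G.InfPath}
    (h : Quot.mk G.stEquiv a = Quot.mk G.stEquiv b) : G.stEquiv a b :=
  (stEquiv_equivalence.eqvGen_iff).mp (Quot.eq.mp h)

/-- The shifted infinite path. -/
def shiftPath (l : G.InfPath) (m : ℕ) : G.InfPath :=
  ⟨fun k => l.1 (m + k), fun k => l.2 (m + k)⟩

theorem mk_shiftPath (l : G.InfPath) (m : ℕ) :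
    Quot.mk G.stEquiv (shiftPath l m) = Quot.mk G.stEquiv l :=
  Quot.sound ⟨0, m, fun k => by rw [Nat.zero_add]; rfl⟩

theorem mem_zb_shift (l : G.InfPath) (m : ℕ) :
    Quot.mk G.stEquiv l ∈ G.Zb (G.r (l.1 m)) :=
  ⟨shiftPath l m, rfl, mk_shiftPath l m⟩

/-- Two elements of a common cylinder set have a vertex below both indices. -/
theorem common_vertex {u₁ u₂ : G.V} {x : G.V ⊕ G.Bdry}
    (h1 : x ∈ G.Zfull u₁) (h2 : x ∈ G.Zfull u₂) :
    ∃ z, G.Le u₁ z ∧ G.Le u₂ z := by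
  cases x with
  | inl a => exact ⟨a, h1, h2⟩
  | inr b =>
    obtain ⟨l₁, hl₁, hm₁⟩ := h1
    obtain ⟨l₂, hl₂, hm₂⟩ := h2
    obtain ⟨m, n, h⟩ := stEquiv_of_mk_eq (hm₁.trans hm₂.symm)
    refine ⟨G.r (l₁.1 m), hl₁ ▸ le_infPath l₁ m, ?_⟩
    have h0 : l₁.1 m = l₂.1 n := h 0
    rw [h0]
    exact hl₂ ▸ le_infPath l₂ n

end DirGraph

/-- In a row-finite, finitely aligned multitree with no sources,
`Z(v) ∩ Z(w)` is the disjoint union of the `Z(u)` over the minimal common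
upper bounds `u` of `v` and `w`. -/
theorem stmt7 (G : DirGraph) [Countable G.V] [Countable G.E]
    (hmt : G.IsMultitree) (hrow : G.RowFinite) (hns : G.NoSources)
    (hfa : G.FinAligned) (v w : G.V) :
    (G.Zfull v ∩ G.Zfull w = ⋃ u ∈ G.mub v w, G.Zfull u) ∧
      (G.mub v w).PairwiseDisjoint G.Zfull := by
  have key : ∀ u₁ ∈ G.mub v w, ∀ u₂ ∈ G.mub v w, ∀ z, G.Le u₁ z → G.Le u₂ z → u₁ = u₂ := by
    rintro u₁ ⟨hv₁, hw₁, hmin₁⟩ u₂ ⟨hv₂, hw₂, hmin₂⟩ z hz₁ hz₂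
    rcases DirGraph.comparable hmt hv₁ hv₂ hz₁ hz₂ with h | h
    · exact hmin₂ u₁ hv₁ hw₁ h
    · exact (hmin₁ u₂ hv₂ hw₂ h).symm
  constructor
  · ext x
    simp only [Set.mem_inter_iff, Set.mem_iUnion, exists_prop]
    constructor
    · rintro ⟨hxv, hxw⟩
      cases x with
      | inl a =>
        obtain ⟨u, hu, hua⟩ := DirGraph.exists_mub_le hmt hxv hxw
        exact ⟨u, hu, hua⟩
      | inr b =>
        obtain ⟨l₁, hl₁, hm₁⟩ := hxv
        obtain ⟨l₂, hl₂, hm₂⟩ := hxw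
        obtain ⟨m, n, h⟩ := DirGraph.stEquiv_of_mk_eq (hm₁.trans hm₂.symm)
        have hvz : G.Le v (G.r (l₁.1 m)) := hl₁ ▸ DirGraph.le_infPath l₁ m
        have hwz : G.Le w (G.r (l₁.1 m)) := by
          have h0 : l₁.1 m = l₂.1 n := h 0
          rw [h0]
          exact hl₂ ▸ DirGraph.le_infPath l₂ n
        obtain ⟨u, hu, huz⟩ := DirGraph.exists_mub_le hmt hvz hwz
        refine ⟨u, hu, DirGraph.zb_mono huz ?_⟩
        rw [← hm₁]
        exact DirGraph.mem_zb_shift l₁ m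
    · rintro ⟨u, hu, hx⟩
      exact ⟨DirGraph.zfull_mono hu.1 hx, DirGraph.zfull_mono hu.2.1 hx⟩
  · intro u₁ h₁ u₂ h₂ hne
    rw [Function.onFun, Set.disjoint_left]
    intro x hx₁ hx₂
    obtain ⟨z, hz₁, hz₂⟩ := DirGraph.common_vertex hx₁ hx₂
    exact hne (key u₁ h₁ u₂ h₂ z hz₁ hz₂)
end

section
/- Let T be a locally finite nonsingular undirected tree. Then its dual graph T̂ — with vertex set T^1, edge set the reduced paths of length 2, and range/source maps r̂(ef) = e, ŝ(ef) = f — is a row-finite, finitely aligned multitree with no sources. -/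
/-- An undirected graph: edges come with an involutive, fixed-point-free reversal. -/
structure UGraph where
  V : Type
  E : Type
  r : E → V
  s : E → V
  bar : E → E
  bar_bar : ∀ e, bar (bar e) = e
  bar_ne : ∀ e, bar e ≠ e
  r_bar : ∀ e, r (bar e) = s e

namespace UGraph

/-- `T.IsUPath v w p` : `p` is a walk from `w` to `v` in the undirected graph `T`. -/
def IsUPath (T : UGraph) : T.V → T.V → List T.E → Prop
  | v, w, [] => v = w
  | v, w, e :: p => T.r e = v ∧ T.IsUPath (T.s e) w p

/-- A reduced path: a walk with no backtracking. -/
def IsRedPath (T : UGraph) (v w : T.V) (p : List T.E) : Prop :=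
  T.IsUPath v w p ∧ p.Chain' (fun e f => f ≠ T.bar e)

/-- A tree: there is a unique reduced path between any two vertices. -/
def IsTree (T : UGraph) : Prop := ∀ v w, ∃! p, T.IsRedPath v w p

/-- Locally finite: every vertex receives finitely many edges. -/
def LocFinite (T : UGraph) : Prop := ∀ v, {e : T.E | T.r e = v}.Finite

/-- Nonsingular: every vertex receives at least two edges. -/
def Nonsingular (T : UGraph) : Prop := ∀ v, ∃ e f, e ≠ f ∧ T.r e = v ∧ T.r f = v

/-- The dual directed graph `T̂`: vertices are the edges of `T`, edges are the reduced
paths of length 2 in `T`, with `r̂(ef) = e` and `ŝ(ef) = f`. -/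
def dual (T : UGraph) : DirGraph where
  V := T.E
  E := {p : T.E × T.E // T.s p.1 = T.r p.2 ∧ p.2 ≠ T.bar p.1}
  r := fun p => p.1.1
  s := fun p => p.1.2

end UGraph

/-!
A directed path in `T̂` from `w` to `v` is the same thing as a reduced path in `T` that begins
with the edge `v` and ends with the edge `w`, so uniqueness of reduced paths in the tree makes
`T̂` a multitree. Row-finiteness and the absence of sources are local statements at the
vertex `s v`. For finite alignment, let `u ≠ v, w` be a minimal common upper bound of `v` and `w`,
reached from `v` through the edge `m` and from `w` through the edge `n`. Minimality forces
`m ≠ n`, so the reduced paths from `s v` to `r u` and from `s w` to `r u` glue to the reduced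
path from `s v` to `s w`. Hence `r u` lies on this fixed finite path, and local finiteness bounds
the number of such `u`.
-/

namespace DirGraph

variable {G : DirGraph}

theorem isDPath_append_s9 :
    ∀ {v w : G.V} (p q : List G.E),
      G.IsDPath v w (p ++ q) ↔ ∃ z, G.IsDPath v z p ∧ G.IsDPath z w q
  | v, w, [], q => by simp [IsDPath]
  | v, w, e :: p, q => by simp [IsDPath, isDPath_append_s9 p q, and_assoc]

theorem le_of_edge (x : G.E) : G.Le (G.r x) (G.s x) := ⟨[x], rfl, rfl⟩

theorem Le.exists_edge_of_ne {v u : G.V} (h : G.Le v u) (hne : v ≠ u) :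
    ∃ x : G.E, G.Le v (G.r x) ∧ G.s x = u := by
  obtain ⟨p, hp⟩ := h
  rcases p.eq_nil_or_concat' with rfl | ⟨p, x, rfl⟩
  · exact absurd hp hne
  obtain ⟨z, hpz, hzx, hxu⟩ := (isDPath_append_s9 p [x]).mp hp
  exact ⟨x, ⟨p, hzx ▸ hpz⟩, hxu⟩

end DirGraph

namespace UGraph

variable {T : UGraph}

theorem s_bar (e : T.E) : T.s (T.bar e) = T.r e := by
  simpa only [T.bar_bar] using (T.r_bar (T.bar e)).symm

theorem IsUPath.append :
    ∀ {p q : List T.E} {a b c : T.V},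
      T.IsUPath a b p → T.IsUPath b c q → T.IsUPath a c (p ++ q)
  | [], _, _, _, _, hp, hq => (hp : _ = _) ▸ hq
  | _ :: _, _, _, _, _, hp, hq => ⟨hp.1, hp.2.append hq⟩

theorem IsUPath.reverse :
    ∀ {p : List T.E} {a b : T.V}, T.IsUPath a b p → T.IsUPath b a (p.map T.bar).reverse
  | [], _, _, hp => (hp : _ = _).symm
  | e :: _, _, _, hp => by
    simpa using hp.2.reverse.append (show T.IsUPath (T.s e) _ [T.bar e] from
      ⟨T.r_bar e, (s_bar e).trans hp.1⟩)

theorem IsUPath.mem_vertices :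
    ∀ {p : List T.E} {a c : T.V}, T.IsUPath a c p → c ∈ a :: p.map T.s
  | [], _, _, hp => List.mem_singleton.mpr (hp : _ = _).symm
  | _ :: _, _, _, hp => List.mem_cons_of_mem _ hp.2.mem_vertices

theorem IsRedPath.tail {a b : T.V} {e : T.E} {p : List T.E} (h : T.IsRedPath a b (e :: p)) :
    T.IsRedPath (T.s e) b p :=
  ⟨h.1.2, h.2.tail⟩

theorem isChain_reverse_map_bar {p : List T.E} (h : p.IsChain fun e f => f ≠ T.bar e) :
    (p.map T.bar).reverse.IsChain fun e f => f ≠ T.bar e := by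
  rw [List.isChain_reverse, List.isChain_map]
  refine h.imp fun e f hef hc => hef ?_
  rw [hc, T.bar_bar]

theorem IsRedPath.append_reverse {a b c : T.V} {p q : List T.E} (hp : T.IsRedPath a c p)
    (hq : T.IsRedPath b c q) (hlast : ∀ e ∈ p.getLast?, ∀ f ∈ q.getLast?, e ≠ f) :
    T.IsRedPath a b (p ++ (q.map T.bar).reverse) := by
  refine ⟨hp.1.append hq.1.reverse, List.isChain_append.mpr
    ⟨hp.2, isChain_reverse_map_bar hq.2, fun e he f hf hfe => ?_⟩⟩
  rw [List.head?_reverse, List.getLast?_map] at hf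
  obtain ⟨f', hf', rfl⟩ := Option.mem_map.mp hf
  exact hlast e he f' hf' (by simpa only [T.bar_bar] using congrArg T.bar hfe.symm)

theorem IsTree.eq {a b : T.V} {p q : List T.E} (htree : T.IsTree) (hp : T.IsRedPath a b p)
    (hq : T.IsRedPath a b q) : p = q :=
  (htree a b).unique hp hq

theorem IsTree.s_ne_r (htree : T.IsTree) (e : T.E) : T.s e ≠ T.r e := fun h =>
  List.cons_ne_nil e [] <|
    htree.eq (a := T.r e) ⟨⟨rfl, h⟩, List.isChain_singleton e⟩ ⟨rfl, List.isChain_nil⟩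

theorem LocFinite.finite_preimage (hlf : T.LocFinite) {C : Set T.V} (hC : C.Finite) :
    (T.r ⁻¹' C).Finite :=
  hC.preimage' fun c _ => hlf c

theorem isRedPath_cons_of_isDPath :
    ∀ {p : List T.dual.E} {v w : T.E}, T.dual.IsDPath v w p →
      T.IsRedPath (T.r v) (T.s w) (v :: p.map fun x => x.1.2)
  | [], _, _, hp => (hp : _ = _) ▸ ⟨⟨rfl, rfl⟩, List.isChain_singleton _⟩
  | x :: _, _, _, ⟨rfl, hp⟩ =>
    have ih := isRedPath_cons_of_isDPath hp
    ⟨⟨rfl, x.2.1.symm, ih.1.2⟩, List.isChain_cons_cons.mpr ⟨x.2.2, ih.2⟩⟩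

theorem isRedPath_of_isDPath {p : List T.dual.E} {v w : T.E} (hp : T.dual.IsDPath v w p) :
    T.IsRedPath (T.s v) (T.s w) (p.map fun x => x.1.2) :=
  (isRedPath_cons_of_isDPath hp).tail

theorem getLast?_cons_of_isDPath :
    ∀ {p : List T.dual.E} {v w : T.E}, T.dual.IsDPath v w p →
      (v :: p.map fun x => x.1.2).getLast? = some w
  | [], _, _, hp => congrArg some hp
  | _ :: _, _, _, ⟨_, hp⟩ => by
    rw [List.map_cons, List.getLast?_cons_cons]
    exact getLast?_cons_of_isDPath hp

theorem eq_of_mem_getLast?_of_isDPath {p : List T.dual.E} {v w e : T.E}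
    (hp : T.dual.IsDPath v w p) (he : e ∈ (p.map fun x => x.1.2).getLast?) : e = w := by
  have := getLast?_cons_of_isDPath hp
  rw [List.getLast?_cons, Option.mem_def.mp he] at this
  exact Option.some_inj.mp this

theorem eq_of_isDPath_of_map_eq :
    ∀ {p q : List T.dual.E} {v w : T.E}, T.dual.IsDPath v w p → T.dual.IsDPath v w q →
      (p.map fun x => x.1.2) = q.map (fun x => x.1.2) → p = q
  | [], [], _, _, _, _, _ => rfl
  | x :: p, y :: q, _, _, ⟨hx, hp⟩, ⟨hy, hq⟩, h => by
    obtain ⟨h₁, h₂⟩ := List.cons.inj h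
    have hxy : x = y := Subtype.ext (Prod.ext (hx.trans hy.symm) h₁)
    subst hxy
    rw [eq_of_isDPath_of_map_eq hp hq h₂]

theorem dual_isMultitree (htree : T.IsTree) : T.dual.IsMultitree := fun _ _ _ _ hp hq =>
  eq_of_isDPath_of_map_eq hp hq (htree.eq (isRedPath_of_isDPath hp) (isRedPath_of_isDPath hq))

theorem dual_rowFinite (hlf : T.LocFinite) : T.dual.RowFinite := by
  intro v
  refine Set.Finite.of_finite_image (f := fun x => x.1.2) ((hlf (T.s v)).subset ?_) ?_
  · rintro _ ⟨x, rfl, rfl⟩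
    exact x.2.1.symm
  · rintro x rfl y hy hxy
    exact Subtype.ext (Prod.ext hy.symm hxy)

theorem dual_noSources (hns : T.Nonsingular) : T.dual.NoSources := by
  intro v
  obtain ⟨e, f, hef, he, hf⟩ := hns (T.s v)
  by_cases hbe : e = T.bar v
  · exact ⟨⟨(v, f), hf.symm, fun hfb => hef (hbe.trans hfb.symm)⟩, rfl⟩
  · exact ⟨⟨(v, e), he.symm, hbe⟩, rfl⟩

theorem r_mem_of_mem_mub (htree : T.IsTree) {v w u : T.E} {g : List T.E}
    (hg : T.IsRedPath (T.s v) (T.s w) g) (hu : u ∈ T.dual.mub v w) (hvu : v ≠ u)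
    (hwu : w ≠ u) :
    T.r u ∈ T.s v :: g.map T.s := by
  obtain ⟨huv, huw, hmin⟩ := hu
  obtain ⟨x, hvx, hxu⟩ := huv.exists_edge_of_ne hvu
  obtain ⟨y, hwy, hyu⟩ := huw.exists_edge_of_ne hwu
  have hsx : T.s (T.dual.r x) = T.r u := hxu ▸ x.2.1
  have hsy : T.s (T.dual.r y) = T.r u := hyu ▸ y.2.1
  by_cases hxy : T.dual.r x = T.dual.r y
  · -- a common last edge would be a common upper bound strictly below `u`
    have hxu' : T.dual.r x = u := hmin _ hvx (hxy ▸ hwy) (hxu ▸ DirGraph.le_of_edge x)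
    exact (htree.s_ne_r u (hxu' ▸ hsx)).elim
  obtain ⟨p, hp⟩ := hvx
  obtain ⟨q, hq⟩ := hwy
  have hpu := isRedPath_of_isDPath hp
  have hqu := isRedPath_of_isDPath hq
  rw [hsx] at hpu
  rw [hsy] at hqu
  have hglue := hpu.append_reverse hqu fun e he f hf =>
    (eq_of_mem_getLast?_of_isDPath hp he).symm ▸ (eq_of_mem_getLast?_of_isDPath hq hf).symm ▸ hxy
  rw [htree.eq hg hglue, List.map_append]
  exact List.mem_cons.mpr <|
    (List.mem_cons.mp hpu.1.mem_vertices).imp_right (List.mem_append_left _)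

theorem dual_finAligned (htree : T.IsTree) (hlf : T.LocFinite) : T.dual.FinAligned := by
  intro v w
  obtain ⟨g, hg, -⟩ := htree (T.s v) (T.s w)
  refine ((hlf.finite_preimage (T.s v :: g.map T.s).finite_toSet).insert v).insert w
    |>.subset fun u hu => ?_
  by_cases hwu : w = u
  · exact Or.inl hwu.symm
  by_cases hvu : v = u
  · exact Or.inr (Or.inl hvu.symm)
  exact Or.inr (Or.inr (r_mem_of_mem_mub htree hg hu hvu hwu))

end UGraph

theorem stmt9_general (T : UGraph)
    (htree : T.IsTree) (hlf : T.LocFinite) (hns : T.Nonsingular) :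
    (T.dual).IsMultitree ∧ (T.dual).RowFinite ∧ (T.dual).NoSources ∧
      (T.dual).FinAligned :=
  ⟨UGraph.dual_isMultitree htree, UGraph.dual_rowFinite hlf, UGraph.dual_noSources hns,
    UGraph.dual_finAligned htree hlf⟩

/-- The dual graph of a locally finite nonsingular undirected tree is a row-finite,
finitely aligned multitree with no sources. -/
theorem stmt9 (T : UGraph) [Countable T.V] [Countable T.E]
    (htree : T.IsTree) (hlf : T.LocFinite) (hns : T.Nonsingular) :
    (T.dual).IsMultitree ∧ (T.dual).RowFinite ∧ (T.dual).NoSources ∧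
      (T.dual).FinAligned :=
  stmt9_general T htree hlf hns
end

section
/- Let T be a locally finite nonsingular undirected tree with dual graph T̂. The natural identification of reduced infinite paths in T with infinite paths in T̂ induces a homeomorphism ∂T ≅ ∂T̂, which is equivariant for any group action on T (and the induced action on T̂). -/
namespace UGraph

/-- Reduced infinite paths in an undirected graph. -/
def RedInf (T : UGraph) :=
  {l : ℕ → T.E // (∀ n, T.s (l n) = T.r (l (n + 1))) ∧ (∀ n, l (n + 1) ≠ T.bar (l n))}

/-- Shift-tail equivalence of reduced infinite paths. -/
def stRed (T : UGraph) (a b : T.RedInf) : Prop :=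
  ∃ m n : ℕ, ∀ k, a.1 (m + k) = b.1 (n + k)

/-- The boundary `∂T` of an undirected graph: shift-tail classes of reduced infinite
paths. -/
def TBdry (T : UGraph) := Quot T.stRed

/-- The cylinder set `Z_∂(e) ⊆ ∂T` of classes of reduced infinite paths starting
with the edge `e`. -/
def ZT (T : UGraph) (e : T.E) : Set T.TBdry :=
  {x | ∃ l : T.RedInf, l.1 0 = e ∧ Quot.mk T.stRed l = x}

/-- The cylinder-set topology on `∂T`. -/
def tbdryTop (T : UGraph) : TopologicalSpace T.TBdry :=
  TopologicalSpace.generateFrom {S | ∃ e, S = T.ZT e}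

/-- The natural identification of a reduced infinite path in `T` with an infinite
directed path in the dual graph `T̂`. -/
def dualInf (T : UGraph) (l : T.RedInf) : (T.dual).InfPath :=
  ⟨fun n => ⟨(l.1 n, l.1 (n + 1)), l.2.1 n, l.2.2 n⟩, fun _ => rfl⟩

/-- The action of a graph automorphism (given on edges) on reduced infinite paths. -/
def actRed (T : UGraph) (aE : T.E → T.E)
    (hadj : ∀ e f, T.s e = T.r f → T.s (aE e) = T.r (aE f))
    (hbar : ∀ e, aE (T.bar e) = T.bar (aE e))
    (hinj : Function.Injective aE) (l : T.RedInf) : T.RedInf :=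
  ⟨fun n => aE (l.1 n), fun n => hadj _ _ (l.2.1 n),
    fun n h => l.2.2 n (hinj (h.trans (hbar (l.1 n)).symm))⟩

end UGraph

/-! The dual path of a reduced path `e₀e₁e₂⋯` is the sequence of its consecutive pairs
`(e₀e₁)(e₁e₂)⋯`, and forgetting second coordinates inverts this. Both shift-tail relations
compare the same edge sequences, so the bijection descends to the boundaries and carries
`Z_∂(e)` onto `Z_∂(e)`; as both topologies are generated by these cylinders, it is a
homeomorphism. -/

open TopologicalSpace

def Equiv.homeomorphGenerateFrom {α β ι : Type*} (e : α ≃ β) {A : ι → Set α}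
    {B : ι → Set β} (h : ∀ i, e '' A i = B i) :
    @Homeomorph α β (generateFrom {S | ∃ i, S = A i}) (generateFrom {S | ∃ i, S = B i}) :=
  letI := generateFrom {S | ∃ i, S = A i}
  letI := generateFrom {S | ∃ i, S = B i}
  { toEquiv := e
    continuous_toFun := by
      refine continuous_generateFrom_iff.mpr ?_
      rintro _ ⟨i, rfl⟩
      change IsOpen (e ⁻¹' B i)
      rw [← h i, e.preimage_image]
      exact isOpen_generateFrom_of_mem ⟨i, rfl⟩
    continuous_invFun := by
      refine continuous_generateFrom_iff.mpr ?_
      rintro _ ⟨i, rfl⟩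
      change IsOpen (e.symm ⁻¹' A i)
      rw [← e.image_eq_preimage_symm, h i]
      exact isOpen_generateFrom_of_mem ⟨i, rfl⟩ }

namespace UGraph

variable (T : UGraph)

def redInfEquivDual : T.RedInf ≃ T.dual.InfPath where
  toFun := T.dualInf
  invFun p := ⟨fun n => (p.1 n).1.1,
    fun n => (p.1 n).2.1.trans (congrArg T.r (p.2 n)),
    fun n h => (p.1 n).2.2 ((p.2 n).trans h)⟩
  left_inv _ := rfl
  right_inv p := Subtype.ext <| funext fun n => Subtype.ext <| Prod.ext rfl (p.2 n).symm

theorem stRed_iff_stEquiv_dualInf (a b : T.RedInf) :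
    T.stRed a b ↔ T.dual.stEquiv (T.dualInf a) (T.dualInf b) := by
  refine exists₂_congr fun m n => ⟨fun h k => ?_, fun h k => congrArg (·.1.1) (h k)⟩
  exact Subtype.ext <| Prod.ext (h k) (h (k + 1))

def bdryEquivDual : T.TBdry ≃ T.dual.Bdry :=
  Quot.congr T.redInfEquivDual T.stRed_iff_stEquiv_dualInf

theorem bdryEquivDual_image_ZT (e : T.E) : T.bdryEquivDual '' T.ZT e = T.dual.Zb e := by
  ext x
  constructor
  · rintro ⟨_, ⟨l, rfl, rfl⟩, rfl⟩
    exact ⟨T.dualInf l, rfl, rfl⟩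
  · rintro ⟨p, rfl, rfl⟩
    exact ⟨_, ⟨T.redInfEquivDual.symm p, rfl, rfl⟩,
      congrArg (Quot.mk _) (T.redInfEquivDual.apply_symm_apply p)⟩

def bdryHomeomorphDual : @Homeomorph T.TBdry T.dual.Bdry T.tbdryTop T.dual.bdryTop :=
  T.bdryEquivDual.homeomorphGenerateFrom T.bdryEquivDual_image_ZT

end UGraph

theorem stmt10_general (T : UGraph) :
    ∃ h : @Homeomorph T.TBdry (T.dual).Bdry T.tbdryTop (T.dual).bdryTop,
      (∀ l : T.RedInf,
        h (Quot.mk T.stRed l) = Quot.mk (T.dual).stEquiv (T.dualInf l)) ∧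
      (∀ (aE : T.E → T.E)
        (hadj : ∀ e f, T.s e = T.r f → T.s (aE e) = T.r (aE f))
        (hbar : ∀ e, aE (T.bar e) = T.bar (aE e))
        (hinj : Function.Injective aE) (l : T.RedInf),
          h (Quot.mk T.stRed (T.actRed aE hadj hbar hinj l)) =
            Quot.mk (T.dual).stEquiv (T.dualInf (T.actRed aE hadj hbar hinj l))) :=
  ⟨T.bdryHomeomorphDual, fun _ => rfl, fun _ _ _ _ _ => rfl⟩

/-- The identification of reduced infinite paths in a locally finite nonsingular tree `T`
with infinite paths in the dual graph `T̂` induces a homeomorphism `∂T ≅ ∂T̂`, which is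
equivariant for any (group) action on `T` by graph automorphisms. -/
theorem stmt10 (T : UGraph) [Countable T.V] [Countable T.E]
    (htree : T.IsTree) (hlf : T.LocFinite) (hns : T.Nonsingular) :
    ∃ h : @Homeomorph T.TBdry (T.dual).Bdry T.tbdryTop (T.dual).bdryTop,
      (∀ l : T.RedInf,
        h (Quot.mk T.stRed l) = Quot.mk (T.dual).stEquiv (T.dualInf l)) ∧
      (∀ (aE : T.E → T.E)
        (hadj : ∀ e f, T.s e = T.r f → T.s (aE e) = T.r (aE f))
        (hbar : ∀ e, aE (T.bar e) = T.bar (aE e))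
        (hinj : Function.Injective aE) (l : T.RedInf),
          h (Quot.mk T.stRed (T.actRed aE hadj hbar hinj l)) =
            Quot.mk (T.dual).stEquiv (T.dualInf (T.actRed aE hadj hbar hinj l))) :=
  stmt10_general T
end

section
/- Suppose a discrete group G acts on a row-finite, finitely aligned multitree E with no sources, and let Γ = G\E be the quotient directed graph. The induced action of G on ∂E is minimal (every orbit is dense) if and only if Γ is cofinal: for every infinite path λ in Γ and every vertex v ∈ Γ^0, there is a vertex w on λ with a directed path from w to v. -/
namespace DirGraph

variable {Γgrp : Type} [Group Γgrp]

/-- The quotient directed graph `G\E` of a graph action: vertices and edges are the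
orbits of vertices and edges. -/
def quotGraph (Γgrp : Type) [Group Γgrp] (E : DirGraph)
    [MulAction Γgrp E.V] [MulAction Γgrp E.E]
    (hr : ∀ (g : Γgrp) (e : E.E), E.r (g • e) = g • E.r e)
    (hs : ∀ (g : Γgrp) (e : E.E), E.s (g • e) = g • E.s e) : DirGraph where
  V := Quotient (MulAction.orbitRel Γgrp E.V)
  E := Quotient (MulAction.orbitRel Γgrp E.E)
  r := Quotient.map E.r (by
    intro a b hab
    obtain ⟨g, hg⟩ := hab
    exact ⟨g, by simp only [← hr, hg]⟩)
  s := Quotient.map E.s (by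
    intro a b hab
    obtain ⟨g, hg⟩ := hab
    exact ⟨g, by simp only [← hs, hg]⟩)

/-- The induced action of a group element on infinite paths. -/
def actInf (E : DirGraph) [MulAction Γgrp E.V] [MulAction Γgrp E.E]
    (hr : ∀ (g : Γgrp) (e : E.E), E.r (g • e) = g • E.r e)
    (hs : ∀ (g : Γgrp) (e : E.E), E.s (g • e) = g • E.s e)
    (g : Γgrp) (l : E.InfPath) : E.InfPath :=
  ⟨fun n => g • l.1 n, fun n => by rw [hs, hr, l.2 n]⟩

/-- The induced action of a group element on the boundary `∂E`. -/
def actBdry (E : DirGraph) [MulAction Γgrp E.V] [MulAction Γgrp E.E]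
    (hr : ∀ (g : Γgrp) (e : E.E), E.r (g • e) = g • E.r e)
    (hs : ∀ (g : Γgrp) (e : E.E), E.s (g • e) = g • E.s e)
    (g : Γgrp) : E.Bdry → E.Bdry :=
  Quot.map (E.actInf hr hs g) (by
    rintro a b ⟨m, n, h⟩
    exact ⟨m, n, fun k => by simp only [actInf, h k]⟩)

end DirGraph
namespace DirGraph

variable {E : DirGraph}

theorem isDPath_append_s11 {v w u : E.V} {p q : List E.E} (hp : E.IsDPath v w p)
    (hq : E.IsDPath w u q) : E.IsDPath v u (p ++ q) := by
  induction p generalizing v with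
  | nil => rwa [show v = w from hp]
  | cons e p ih => exact ⟨hp.1, ih hp.2⟩

theorem Le.trans' {v w u : E.V} (h1 : E.Le v w) (h2 : E.Le w u) : E.Le v u := by
  obtain ⟨p, hp⟩ := h1; obtain ⟨q, hq⟩ := h2
  exact ⟨p ++ q, isDPath_append_s11 hp hq⟩

/-- Shift of an infinite path. -/
def shift (l : E.InfPath) (n : ℕ) : E.InfPath :=
  ⟨fun k => l.1 (n + k), fun k => l.2 (n + k)⟩

theorem le_range (l : E.InfPath) {m n : ℕ} (h : m ≤ n) :
    E.Le (E.r (l.1 m)) (E.r (l.1 n)) := by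
  induction n with
  | zero => exact ⟨[], congrArg (E.r ∘ l.1) (Nat.le_zero.mp h)⟩
  | succ n ih =>
    rcases Nat.lt_or_ge m (n+1) with h' | h'
    · exact Le.trans' (ih (Nat.lt_succ_iff.mp h')) ⟨[l.1 n], rfl, l.2 n⟩
    · exact ⟨[], congrArg (E.r ∘ l.1) (Nat.le_antisymm h h')⟩

/-- Prepend an edge to an infinite path. -/
def consPath (e : E.E) (l : E.InfPath) (h : E.s e = E.r (l.1 0)) : E.InfPath :=
  ⟨fun n => Nat.casesOn n e (fun k => l.1 k), by
    intro n
    cases n with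
    | zero => exact h
    | succ k => exact l.2 k⟩

/-- Prepend a finite path to an infinite path. -/
def extend (l : E.InfPath) : (p : List E.E) → (v : E.V) →
    E.IsDPath v (E.r (l.1 0)) p →
    {m : E.InfPath // E.r (m.1 0) = v ∧ ∃ M, ∀ k, m.1 (M + k) = l.1 k}
  | [], v, h => ⟨l, (show v = E.r (l.1 0) from h).symm, 0, fun k => congrArg l.1 (Nat.zero_add k)⟩
  | e :: p, v, h =>
    let m' := extend l p (E.s e) h.2
    ⟨consPath e m'.1 m'.2.1.symm, h.1, m'.2.2.choose + 1, fun k => by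
      show (consPath e m'.1 m'.2.1.symm).1 (m'.2.2.choose + 1 + k) = l.1 k
      rw [show m'.2.2.choose + 1 + k = (m'.2.2.choose + k) + 1 by omega]
      exact m'.2.2.choose_spec k⟩

theorem stEquiv_equivalence_s11 : Equivalence E.stEquiv where
  refl _ := ⟨0, 0, fun _ => rfl⟩
  symm := by rintro a b ⟨m, n, h⟩; exact ⟨n, m, fun k => (h k).symm⟩
  trans := by
    rintro a b c ⟨m, n, h1⟩ ⟨m', n', h2⟩
    refine ⟨m + m', n' + n, fun k => ?_⟩
    have h1' := h1 (m' + k); have h2' := h2 (n + k)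
    rw [show m + (m' + k) = m + m' + k by omega] at h1'
    rw [show n + (m' + k) = m' + (n + k) by omega] at h1'
    rw [show n' + (n + k) = n' + n + k by omega] at h2'
    rw [h1', h2']

theorem quot_mk_eq {a b : E.InfPath} :
    Quot.mk E.stEquiv a = Quot.mk E.stEquiv b ↔ E.stEquiv a b := by
  constructor
  · intro h
    exact (stEquiv_equivalence_s11.eqvGen_iff).mp (Quot.eqvGen_exact h)
  · exact Quot.sound

theorem mem_Zb_iff (l : E.InfPath) (v : E.V) :
    Quot.mk E.stEquiv l ∈ E.Zb v ↔ ∃ n, E.Le v (E.r (l.1 n)) := by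
  constructor
  · rintro ⟨l', hv, hq⟩
    obtain ⟨m, n, h⟩ := quot_mk_eq.mp hq
    refine ⟨n, ?_⟩
    have h0 : E.r (l'.1 m) = E.r (l.1 n) := by
      have := h 0; rw [Nat.add_zero, Nat.add_zero] at this; rw [this]
    have hle := le_range l' (Nat.zero_le m)
    rwa [hv, h0] at hle
  · rintro ⟨n, p, hp⟩
    obtain ⟨m, hm, M, hM⟩ := extend (shift l n) p v hp
    exact ⟨m, hm, Quot.sound ⟨M, n, fun k => hM k⟩⟩

end DirGraph
namespace DirGraph

section Quot

variable {Γgrp : Type} [Group Γgrp] {E : DirGraph}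
  [MulAction Γgrp E.V] [MulAction Γgrp E.E]
  (hr : ∀ (g : Γgrp) (e : E.E), E.r (g • e) = g • E.r e)
  (hs : ∀ (g : Γgrp) (e : E.E), E.s (g • e) = g • E.s e)

local notation "Γq" => quotGraph Γgrp E hr hs
local notation "mkV" => Quotient.mk (MulAction.orbitRel Γgrp E.V)
local notation "mkE" => Quotient.mk (MulAction.orbitRel Γgrp E.E)

theorem quot_r (e : E.E) : (Γq).r (mkE e) = mkV (E.r e) := rfl

theorem quot_s (e : E.E) : (Γq).s (mkE e) = mkV (E.s e) := rfl

theorem exists_smul_eq_of_mk_eq {α : Type} [MulAction Γgrp α] {a b : α}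
    (h : Quotient.mk (MulAction.orbitRel Γgrp α) a
       = Quotient.mk (MulAction.orbitRel Γgrp α) b) : ∃ g : Γgrp, g • b = a := by
  obtain ⟨g, hg⟩ := Quotient.exact h
  exact ⟨g, hg⟩

theorem mkV_smul (g : Γgrp) (x : E.V) : mkV (g • x) = mkV x :=
  Quotient.sound ⟨g, rfl⟩

theorem proj_isDPath {v w : E.V} {p : List E.E} (h : E.IsDPath v w p) :
    (Γq).IsDPath (mkV v) (mkV w) (p.map (fun e => mkE e)) := by
  induction p generalizing v with
  | nil => exact congrArg (fun x => mkV x) (show v = w from h)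
  | cons e p ih => exact ⟨congrArg (fun x => mkV x) h.1, ih h.2⟩

theorem proj_le {v w : E.V} (h : E.Le v w) : (Γq).Le (mkV v) (mkV w) := by
  obtain ⟨p, hp⟩ := h
  exact ⟨p.map (fun e => mkE e), proj_isDPath hr hs hp⟩

theorem lift_path (q : List (Γq).E) : ∀ (vb wb : (Γq).V), (Γq).IsDPath vb wb q →
    ∀ v : E.V, mkV v = vb → ∃ (w : E.V) (p : List E.E), mkV w = wb ∧ E.IsDPath v w p := by
  induction q with
  | nil =>
    intro vb wb h v hv
    exact ⟨v, [], by rw [hv, show vb = wb from h], rfl⟩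
  | cons e q ih =>
    intro vb wb h v hv
    obtain ⟨e₀, he₀⟩ := Quotient.exists_rep e
    have h1 : mkV (E.r e₀) = mkV v := by
      rw [hv, ← h.1, ← he₀, quot_r]
    obtain ⟨g, hg⟩ := exists_smul_eq_of_mk_eq h1
    set e₁ := g⁻¹ • e₀ with he₁
    have hre₁ : E.r e₁ = v := by rw [he₁, hr, ← hg, smul_smul, inv_mul_cancel, one_smul]
    have hmke₁ : mkE e₁ = e := by
      rw [← he₀]
      exact Quotient.sound ⟨g⁻¹, rfl⟩
    have hse : mkV (E.s e₁) = (Γq).s e := by rw [← hmke₁, quot_s]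
    obtain ⟨w, p, hw, hp⟩ := ih ((Γq).s e) wb h.2 (E.s e₁) hse
    exact ⟨w, e₁ :: p, hw, hre₁, hp⟩

/-- A choice of an edge lifting the next edge of an infinite quotient path,
composable with a given lift of the current edge. -/
theorem lift_step (lam : (Γq).InfPath) (n : ℕ) (e : E.E) (he : mkE e = lam.1 n) :
    ∃ e' : E.E, mkE e' = lam.1 (n + 1) ∧ E.r e' = E.s e := by
  obtain ⟨e₀, he₀⟩ := Quotient.exists_rep (lam.1 (n + 1))
  have h1 : mkV (E.r e₀) = mkV (E.s e) := by
    rw [show mkV (E.r e₀) = (Γq).r (mkE e₀) from rfl, he₀, ← lam.2 n, ← he, quot_s]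
  obtain ⟨g, hg⟩ := exists_smul_eq_of_mk_eq h1
  refine ⟨g⁻¹ • e₀, ?_, ?_⟩
  · rw [← he₀]
    exact Quotient.sound ⟨g⁻¹, rfl⟩
  · rw [hr, ← hg, smul_smul, inv_mul_cancel, one_smul]

/-- A lifted sequence of edges for an infinite quotient path. -/
noncomputable def liftSeq (lam : (Γq).InfPath) : (n : ℕ) → {e : E.E // mkE e = lam.1 n}
  | 0 => ⟨(Quotient.exists_rep (lam.1 0)).choose, (Quotient.exists_rep (lam.1 0)).choose_spec⟩
  | n + 1 =>
    ⟨(lift_step hr hs lam n (liftSeq lam n).1 (liftSeq lam n).2).choose,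
     (lift_step hr hs lam n (liftSeq lam n).1 (liftSeq lam n).2).choose_spec.1⟩

theorem liftSeq_comp (lam : (Γq).InfPath) (n : ℕ) :
    E.s ((liftSeq hr hs lam n).1) = E.r ((liftSeq hr hs lam (n + 1)).1) := by
  rw [show liftSeq hr hs lam (n+1)
      = ⟨(lift_step hr hs lam n (liftSeq hr hs lam n).1 (liftSeq hr hs lam n).2).choose,
     (lift_step hr hs lam n (liftSeq hr hs lam n).1 (liftSeq hr hs lam n).2).choose_spec.1⟩
     from rfl]
  exact (lift_step hr hs lam n (liftSeq hr hs lam n).1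
    (liftSeq hr hs lam n).2).choose_spec.2.symm

/-- Lift of an infinite quotient path. -/
noncomputable def liftInf (lam : (Γq).InfPath) :
    {mu : E.InfPath // ∀ n, mkE (mu.1 n) = lam.1 n} :=
  ⟨⟨fun n => (liftSeq hr hs lam n).1, liftSeq_comp hr hs lam⟩,
   fun n => (liftSeq hr hs lam n).2⟩

end Quot

/-- An infinite path into a given vertex, assuming no sources. -/
noncomputable def intoSeq {E : DirGraph} (hnsrc : E.NoSources) (v : E.V) : ℕ → E.E
  | 0 => (hnsrc v).choose
  | n + 1 => (hnsrc (E.s (intoSeq hnsrc v n))).choose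

noncomputable def intoPath {E : DirGraph} (hnsrc : E.NoSources) (v : E.V) :
    {l : E.InfPath // E.r (l.1 0) = v} :=
  ⟨⟨intoSeq hnsrc v, fun n => by
      rw [show intoSeq hnsrc v (n+1) = (hnsrc (E.s (intoSeq hnsrc v n))).choose from rfl]
      exact ((hnsrc (E.s (intoSeq hnsrc v n))).choose_spec).symm⟩,
   (hnsrc v).choose_spec⟩

end DirGraph
open DirGraph in
/-- The induced action of `G` on `∂E` is minimal iff the quotient graph `Γ = G\E` is
cofinal: for every infinite path `λ` in `Γ` and every vertex `v` of `Γ`, some vertex `w`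
on `λ` admits a directed path from `w` to `v`. -/
theorem stmt11 (Γgrp : Type) [Group Γgrp] [Countable Γgrp] (E : DirGraph)
    [Countable E.V] [Countable E.E]
    [MulAction Γgrp E.V] [MulAction Γgrp E.E]
    (hr : ∀ (g : Γgrp) (e : E.E), E.r (g • e) = g • E.r e)
    (hs : ∀ (g : Γgrp) (e : E.E), E.s (g • e) = g • E.s e)
    (hmt : E.IsMultitree) (hrow : E.RowFinite) (hnsrc : E.NoSources)
    (hfa : E.FinAligned) :
    (∀ b : E.Bdry, @Dense E.Bdry E.bdryTop {x | ∃ g : Γgrp, E.actBdry hr hs g b = x}) ↔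
      (∀ (l : (quotGraph Γgrp E hr hs).InfPath) (v : (quotGraph Γgrp E hr hs).V),
        ∃ n : ℕ, (quotGraph Γgrp E hr hs).Le v ((quotGraph Γgrp E hr hs).r (l.1 n))) := by
  classical
  letI : TopologicalSpace E.Bdry := E.bdryTop
  constructor
  · -- minimality implies cofinality
    intro h lam vb
    obtain ⟨mu, hmu⟩ := liftInf hr hs lam
    obtain ⟨v, hv⟩ := Quotient.exists_rep vb
    obtain ⟨l0, hl0⟩ := intoPath hnsrc v
    have hopen : IsOpen (E.Zb v) := TopologicalSpace.GenerateOpen.basic _ ⟨v, rfl⟩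
    have hne : (E.Zb v).Nonempty := ⟨Quot.mk _ l0, l0, hl0, rfl⟩
    obtain ⟨x, hx, g, hg⟩ := dense_iff_inter_open.mp (h (Quot.mk _ mu)) (E.Zb v) hopen hne
    rw [← hg] at hx
    have hx' : Quot.mk E.stEquiv (E.actInf hr hs g mu) ∈ E.Zb v := hx
    obtain ⟨n, hle⟩ := (mem_Zb_iff _ _).mp hx'
    refine ⟨n, ?_⟩
    have hproj := proj_le hr hs hle
    have h2 : E.r ((E.actInf hr hs g mu).1 n) = g • E.r (mu.1 n) := hr g (mu.1 n)
    rw [h2, mkV_smul, hv] at hproj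
    rwa [show Quotient.mk (MulAction.orbitRel Γgrp E.V) (E.r (mu.1 n))
        = (quotGraph Γgrp E hr hs).r (lam.1 n) from by rw [← hmu n]; rfl] at hproj
  · -- cofinality implies minimality
    intro hcf b
    rw [dense_iff_inter_open]
    intro U hU hUne
    have hbasis := TopologicalSpace.isTopologicalBasis_of_subbasis
      (rfl : E.bdryTop = TopologicalSpace.generateFrom {S | ∃ v, S = E.Zb v})
    obtain ⟨x, hxU⟩ := hUne
    obtain ⟨o, ho, hxo, hoU⟩ := hbasis.exists_subset_of_mem_open hxU hU
    obtain ⟨f, ⟨hffin, hfsub⟩, rfl⟩ := ho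
    obtain ⟨l, rfl⟩ := Quot.exists_rep x
    obtain ⟨mu, rfl⟩ := Quot.exists_rep b
    have h1 : ∀ S, S ∈ f → ∃ (n : ℕ) (v : E.V), S = E.Zb v ∧ E.Le v (E.r (l.1 n)) := by
      intro S hS
      obtain ⟨v, rfl⟩ := hfsub hS
      obtain ⟨n, hn⟩ := (mem_Zb_iff _ _).mp (hxo _ hS)
      exact ⟨n, v, rfl, hn⟩
    have hEV : Nonempty E.V := ⟨E.r (l.1 0)⟩
    choose! nf vf hf1 hf2 using h1
    obtain ⟨N, hN⟩ := (hffin.image nf).bddAbove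
    have hkey : ∀ S ∈ f, E.Le (vf S) (E.r (l.1 N)) := fun S hS =>
      Le.trans' (hf2 S hS) (le_range l (hN (Set.mem_image_of_mem nf hS)))
    set lam : (quotGraph Γgrp E hr hs).InfPath :=
      ⟨fun n => Quotient.mk (MulAction.orbitRel Γgrp E.E) (mu.1 n),
       fun n => congrArg (Quotient.mk (MulAction.orbitRel Γgrp E.V)) (mu.2 n)⟩ with hlam
    obtain ⟨n, q, hq⟩ := hcf lam (Quotient.mk (MulAction.orbitRel Γgrp E.V) (E.r (l.1 N)))
    obtain ⟨w, p, hw, hp⟩ := lift_path hr hs q _ _ hq (E.r (l.1 N)) rfl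
    have hw' : Quotient.mk (MulAction.orbitRel Γgrp E.V) w
        = Quotient.mk (MulAction.orbitRel Γgrp E.V) (E.r (mu.1 n)) := hw
    obtain ⟨g, hg⟩ := exists_smul_eq_of_mk_eq hw'
    set mu' := E.actInf hr hs g mu with hmu'
    have hrn : E.r (mu'.1 n) = w := by
      show E.r (g • mu.1 n) = w
      rw [hr, hg]
    have hp' : E.IsDPath (E.r (l.1 N)) (E.r ((shift mu' n).1 0)) p := by
      show E.IsDPath (E.r (l.1 N)) (E.r (mu'.1 (n + 0))) p
      rw [Nat.add_zero, hrn]; exact hp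
    obtain ⟨m, hm0, M, hM⟩ := extend (shift mu' n) p (E.r (l.1 N)) hp'
    refine ⟨Quot.mk _ m, hoU (Set.mem_sInter.mpr ?_), g, ?_⟩
    · intro S hS
      rw [hf1 S hS]
      exact (mem_Zb_iff _ _).mpr ⟨0, by rw [hm0]; exact hkey S hS⟩
    · show Quot.mk E.stEquiv mu' = Quot.mk E.stEquiv m
      exact Quot.sound (stEquiv_equivalence_s11.symm ⟨M, n, hM⟩)
end

section
/- Suppose a discrete group G acts on a row-finite, finitely aligned multitree E with no sources. For any finite path α = e_1⋯e_n in the quotient graph Γ = G\E and any lift v′ ∈ E^0 of r(α), the number of lifts of α in E with range v′ equals the product ∏_{i=1}^n [G_{r(e_i)} : G_{e_i}] of the indices of the edge stabilisers in the range-vertex stabilisers. -/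
/-!
A lift of the path `c :: α` with range `v'` is a lift `e` of `c` with range `v'` followed by a
lift of `α` with range `s e`. All these sources lie over `s c`, so by induction the second
factor has the same size for every `e`. The lifts of `c` with range `v'` form a translate of the
orbit of a lift `x` of `c` under the stabiliser of `r x`, whose size is the index of the
stabiliser of `x` in it by the orbit–stabiliser theorem.
-/
open MulAction Pointwise

theorem Nat.card_sigma_of_forall_card_eq {ι : Type*} {β : ι → Type*} {n : ℕ}
    (h : ∀ i, Nat.card (β i) = n) : Nat.card (Σ i, β i) = Nat.card ι * n := by
  rcases eq_or_ne n 0 with rfl | hn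
  · rw [mul_zero]
    by_cases hinf : ∃ i, Infinite (β i)
    · obtain ⟨i, _⟩ := hinf
      have : Infinite (Σ i, β i) := Infinite.of_injective (Sigma.mk i) sigma_mk_injective
      exact Nat.card_eq_zero_of_infinite
    · have : ∀ i, IsEmpty (β i) := fun i =>
        have : Finite (β i) := not_infinite_iff_finite.mp fun hi => hinf ⟨i, hi⟩
        Finite.card_eq_zero_iff.mp (h i)
      have : IsEmpty (Σ i, β i) := ⟨fun ⟨_, b⟩ => isEmptyElim b⟩
      exact Nat.card_of_isEmpty
  · have (i : ι) : Finite (β i) := Nat.finite_of_card_ne_zero (h i ▸ hn)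
    let e : (Σ i, β i) ≃ ι × Fin n :=
      (Equiv.sigmaCongrRight fun i => (Finite.equivFin (β i)).trans (finCongr (h i))).trans
        (Equiv.sigmaEquivProd ι (Fin n))
    rw [Nat.card_congr e, Nat.card_prod, Nat.card_fin]

namespace MulAction

variable {G V E : Type*} [Group G] [MulAction G V] [MulAction G E] {r : E → V}

theorem orbit_stabilizer_eq_orbit_inter_preimage (hr : ∀ (g : G) (e : E), r (g • e) = g • r e)
    (x : E) : orbit (stabilizer G (r x)) x = orbit G x ∩ r ⁻¹' {r x} := by
  ext e
  constructor
  · rintro ⟨h, rfl⟩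
    exact ⟨⟨h, rfl⟩, by simp [Subgroup.smul_def, hr, mem_stabilizer_iff.mp h.2]⟩
  · rintro ⟨⟨g, rfl⟩, hg⟩
    exact ⟨⟨g, by simpa [hr] using hg⟩, rfl⟩

theorem ncard_orbit_inter_preimage_eq_relIndex (hr : ∀ (g : G) (e : E), r (g • e) = g • r e)
    (x : E) :
    (orbit G x ∩ r ⁻¹' {r x}).ncard = (stabilizer G x).relIndex (stabilizer G (r x)) := by
  have key : (stabilizer G x).subgroupOf (stabilizer G (r x)) =
      stabilizer (stabilizer G (r x)) x := by
    ext; rfl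
  rw [Subgroup.relIndex, key, index_stabilizer, orbit_stabilizer_eq_orbit_inter_preimage hr]

theorem orbit_inter_preimage_smul (hr : ∀ (g : G) (e : E), r (g • e) = g • r e)
    (x : E) (g : G) (v : V) :
    orbit G x ∩ r ⁻¹' {g • v} = g • (orbit G x ∩ r ⁻¹' {v}) := by
  ext e
  simp [Set.mem_smul_set_iff_inv_smul_mem, hr, inv_smul_eq_iff, ← orbit_eq_iff, orbit_smul]

theorem ncard_orbit_inter_preimage_of_mem_orbit (hr : ∀ (g : G) (e : E), r (g • e) = g • r e)
    {x : E} {v : V} (hv : v ∈ orbit G (r x)) :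
    (orbit G x ∩ r ⁻¹' {v}).ncard = (stabilizer G x).relIndex (stabilizer G (r x)) := by
  obtain ⟨g, rfl⟩ := hv
  rw [orbit_inter_preimage_smul hr, Set.ncard_smul_set, ncard_orbit_inter_preimage_eq_relIndex hr]

end MulAction

namespace DirGraph

variable {X : Type*} (G : DirGraph) (f : G.E → X)

def pathsOver (v : G.V) (α : List X) : Set (List G.E) :=
  {p | (∃ w, G.IsDPath v w p) ∧ p.map f = α}

theorem card_pathsOver_nil (v : G.V) : Nat.card (G.pathsOver f v []) = 1 := by
  have : G.pathsOver f v [] = {[]} := by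
    ext p
    simp only [pathsOver, Set.mem_ofPred_eq, List.map_eq_nil_iff, Set.mem_singleton_iff]
    exact ⟨And.right, fun hp => ⟨⟨v, hp ▸ rfl⟩, hp⟩⟩
  rw [this, Nat.card_unique]

noncomputable def pathsOverConsEquiv (v : G.V) (c : X) (α : List X) :
    (Σ e : {e // G.r e = v ∧ f e = c}, G.pathsOver f (G.s e) α) ≃
      G.pathsOver f v (c :: α) := by
  refine Equiv.ofBijective
    (fun ⟨e, q⟩ => ⟨e.1 :: q.1, q.2.1.imp fun _ hq => ⟨e.2.1, hq⟩, by
      rw [List.map_cons, e.2.2, q.2.2]⟩) ⟨?_, ?_⟩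
  · rintro ⟨⟨e, he⟩, ⟨q, hq⟩⟩ ⟨⟨e', he'⟩, ⟨q', hq'⟩⟩ h
    obtain ⟨rfl, rfl⟩ := List.cons.inj (congrArg Subtype.val h)
    rfl
  · rintro ⟨_ | ⟨e, q⟩, hp, hm⟩
    · cases hm
    · obtain ⟨w, he, hq⟩ := hp
      obtain ⟨hc, hα⟩ := List.cons.inj hm
      exact ⟨⟨⟨e, he, hc⟩, ⟨q, ⟨w, hq⟩, hα⟩⟩, rfl⟩

theorem card_pathsOver_cons {v : G.V} {c : X} {α : List X} {n : ℕ}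
    (h : ∀ e : {e // G.r e = v ∧ f e = c}, Nat.card (G.pathsOver f (G.s e) α) = n) :
    Nat.card (G.pathsOver f v (c :: α)) = Nat.card {e // G.r e = v ∧ f e = c} * n := by
  rw [← Nat.card_congr (G.pathsOverConsEquiv f v c α), Nat.card_sigma_of_forall_card_eq h]

end DirGraph

namespace DirGraph

variable {Γgrp : Type} [Group Γgrp] {E : DirGraph} [MulAction Γgrp E.V] [MulAction Γgrp E.E]
  {hr : ∀ (g : Γgrp) (e : E.E), E.r (g • e) = g • E.r e}
  {hs : ∀ (g : Γgrp) (e : E.E), E.s (g • e) = g • E.s e}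

theorem card_edge_lifts_eq_relIndex {c : (quotGraph Γgrp E hr hs).E} {x : E.E}
    (hx : Quotient.mk _ x = c) {v : E.V} (hv : (quotGraph Γgrp E hr hs).r c = Quotient.mk _ v) :
    Nat.card {e // E.r e = v ∧
        (Quotient.mk (orbitRel Γgrp E.E) e : (quotGraph Γgrp E hr hs).E) = c} =
      (stabilizer Γgrp x).relIndex (stabilizer Γgrp (E.r x)) := by
  subst hx
  have hv' : v ∈ orbit Γgrp (E.r x) := orbitRel_apply.mp (Quotient.exact hv.symm)
  rw [← ncard_orbit_inter_preimage_of_mem_orbit hr hv', ← Nat.card_coe_set_eq]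
  refine Nat.card_congr (Equiv.subtypeEquivRight fun e => ?_)
  rw [and_comm, Quotient.eq, orbitRel_apply]
  rfl

end DirGraph

open DirGraph in
theorem stmt13_general (Γgrp : Type) [Group Γgrp] (E : DirGraph)
    [MulAction Γgrp E.V] [MulAction Γgrp E.E]
    (hr : ∀ (g : Γgrp) (e : E.E), E.r (g • e) = g • E.r e)
    (hs : ∀ (g : Γgrp) (e : E.E), E.s (g • e) = g • E.s e)
    (ℓ : (quotGraph Γgrp E hr hs).E → E.E)
    (hℓ : ∀ c, (Quotient.mk (MulAction.orbitRel Γgrp E.E) (ℓ c) :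
      (quotGraph Γgrp E hr hs).E) = c)
    (α : List (quotGraph Γgrp E hr hs).E) (v' : E.V)
    (hα : ∃ w, (quotGraph Γgrp E hr hs).IsDPath
      (Quotient.mk (MulAction.orbitRel Γgrp E.V) v') w α) :
    Nat.card {p : List E.E // (∃ w, E.IsDPath v' w p) ∧
        p.map (fun e => (Quotient.mk (MulAction.orbitRel Γgrp E.E) e :
          (quotGraph Γgrp E hr hs).E)) = α} =
      (α.map (fun c => (MulAction.stabilizer Γgrp (ℓ c)).relIndex
        (MulAction.stabilizer Γgrp (E.r (ℓ c))))).prod := by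
  change Nat.card (E.pathsOver _ v' α) = _
  induction α generalizing v' with
  | nil => exact E.card_pathsOver_nil _ v'
  | cons c α ih =>
    obtain ⟨w, hc, hα⟩ := hα
    have hsource (e : {e // E.r e = v' ∧ Quotient.mk _ e = c}) :
        (quotGraph Γgrp E hr hs).s c = Quotient.mk _ (E.s e) := by
      obtain ⟨e, -, rfl⟩ := e
      rfl
    rw [E.card_pathsOver_cons _ fun e => ih (E.s e) ⟨w, hsource e ▸ hα⟩, List.map_cons,
      List.prod_cons]
    exact congrArg (· * _) (card_edge_lifts_eq_relIndex (hℓ c) hc)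

open DirGraph in
/-- For a finite path `α` in `Γ = G\E` and a lift `v'` of its range, the number of lifts
of `α` with range `v'` equals the product over the edges `e` of `α` of the indices
`[G_{r(e)} : G_e]` of the edge stabilisers in the range-vertex stabilisers
(computed from any chosen lifts). -/
theorem stmt13 (Γgrp : Type) [Group Γgrp] [Countable Γgrp] (E : DirGraph)
    [Countable E.V] [Countable E.E]
    [MulAction Γgrp E.V] [MulAction Γgrp E.E]
    (hr : ∀ (g : Γgrp) (e : E.E), E.r (g • e) = g • E.r e)
    (hs : ∀ (g : Γgrp) (e : E.E), E.s (g • e) = g • E.s e)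
    (hmt : E.IsMultitree) (hrow : E.RowFinite) (hnsrc : E.NoSources)
    (hfa : E.FinAligned)
    (ℓ : (quotGraph Γgrp E hr hs).E → E.E)
    (hℓ : ∀ c, (Quotient.mk (MulAction.orbitRel Γgrp E.E) (ℓ c) :
      (quotGraph Γgrp E hr hs).E) = c)
    (α : List (quotGraph Γgrp E hr hs).E) (v' : E.V)
    (hα : ∃ w, (quotGraph Γgrp E hr hs).IsDPath
      (Quotient.mk (MulAction.orbitRel Γgrp E.V) v') w α) :
    Nat.card {p : List E.E // (∃ w, E.IsDPath v' w p) ∧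
        p.map (fun e => (Quotient.mk (MulAction.orbitRel Γgrp E.E) e :
          (quotGraph Γgrp E hr hs).E)) = α} =
      (α.map (fun c => (MulAction.stabilizer Γgrp (ℓ c)).relIndex
        (MulAction.stabilizer Γgrp (E.r (ℓ c))))).prod :=
  stmt13_general Γgrp E hr hs ℓ hℓ α v' hα
end

section
/- Suppose a discrete group G acts freely on a row-finite, finitely aligned multitree E with no sources, and the quotient graph Γ = G\E is aperiodic (every loop has an entrance). Then for every vertex v′ ∈ E^0, there is an infinite path λ′ ∈ v′E^∞ whose shift-tail class [λ′] ∈ ∂E has trivial isotropy; consequently the action G ↷ ∂E is topologically free. -/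
namespace Stmt14Aux

open DirGraph

variable {G : DirGraph}

theorem isDPath_append {v w u : G.V} {p q : List G.E} (hp : G.IsDPath v w p)
    (hq : G.IsDPath w u q) : G.IsDPath v u (p ++ q) := by
  induction p generalizing v with
  | nil => simp only [DirGraph.IsDPath] at hp; subst hp; simpa using hq
  | cons e p ih => exact ⟨hp.1, ih hp.2⟩

theorem isDPath_split {v u : G.V} {p q : List G.E} (h : G.IsDPath v u (p ++ q)) :
    ∃ w, G.IsDPath v w p ∧ G.IsDPath w u q := by
  induction p generalizing v with
  | nil => exact ⟨v, rfl, by simpa using h⟩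
  | cons e p ih =>
    obtain ⟨w, h1, h2⟩ := ih h.2
    exact ⟨w, ⟨h.1, h1⟩, h2⟩

theorem isDPath_getD_zero {v u : G.V} {p : List G.E} (h : G.IsDPath v u p)
    (hp : p ≠ []) (a : G.E) : G.r (p.getD 0 a) = v := by
  cases p with
  | nil => exact absurd rfl hp
  | cons e p => exact h.1

theorem isDPath_getD_succ {v u : G.V} {p : List G.E} (h : G.IsDPath v u p)
    {n : ℕ} (hn : n + 1 < p.length) (a : G.E) :
    G.s (p.getD n a) = G.r (p.getD (n + 1) a) := by
  induction p generalizing v n with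
  | nil => simp at hn
  | cons e p ih =>
    cases n with
    | zero =>
      cases p with
      | nil => simp at hn
      | cons f p => exact h.2.1.symm
    | succ n => exact ih h.2 (by simpa using hn)

theorem isDPath_singleton {w : G.V} {e : G.E} (he : G.r e = w) :
    G.IsDPath w (G.s e) [e] := ⟨he, rfl⟩

theorem exists_dpath_length (hns : G.NoSources) (x : G.V) (n : ℕ) :
    ∃ p w, G.IsDPath x w p ∧ p.length = n := by
  induction n with
  | zero => exact ⟨[], x, rfl, rfl⟩
  | succ n ih =>
    obtain ⟨p, w, hp, hl⟩ := ih
    obtain ⟨e, he⟩ := hns w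
    refine ⟨p ++ [e], G.s e, isDPath_append hp (isDPath_singleton he), by simp [hl]⟩

theorem exists_mismatch_block (hns : G.NoSources)
    (hap : ∀ (x : G.V) (p : List G.E), p ≠ [] → G.IsDPath x x p →
      ∃ e ∈ p, ∃ f g : G.E, f ≠ g ∧ G.r f = G.r e ∧ G.r g = G.r e)
    (x : G.V) (d : ℕ) (hd : 0 < d) :
    ∃ p w, G.IsDPath x w p ∧ ∃ j, j + d < p.length ∧
      ∀ a : G.E, p.getD j a ≠ p.getD (j + d) a := by
  obtain ⟨p, w, hp, hl⟩ := exists_dpath_length hns x d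
  have hpne : p ≠ [] := by
    intro h; rw [h] at hl; simp at hl; omega
  by_cases hxw : x = w
  · -- loop case
    subst hxw
    obtain ⟨e, hep, f, g, hfg, hf, hg⟩ := hap x p hpne hp
    obtain ⟨p₁, p₂, rfl⟩ := List.append_of_mem hep
    have he' : ∃ e', e' ≠ e ∧ G.r e' = G.r e := by
      by_cases hfe : f = e
      · exact ⟨g, fun hge => hfg (hfe.trans hge.symm), hg⟩
      · exact ⟨f, hfe, hf⟩
    obtain ⟨e', he'e, hre'⟩ := he'
    obtain ⟨u, hu1, hu2⟩ := isDPath_split hp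
    have hre : G.r e = u := hu2.1
    have hll : (p₁ ++ e :: p₂).length = p₁.length + p₂.length + 1 := by simp; omega
    have hlen1 : p₁.length < d := by omega
    refine ⟨(p₁ ++ e :: p₂) ++ (p₁ ++ [e']), G.s e',
      isDPath_append hp (isDPath_append hu1 (isDPath_singleton (hre'.trans hre))),
      p₁.length, ?_, ?_⟩
    · simp only [List.length_append, List.length_cons, List.length_singleton]
      omega
    · intro a
      have h1 : ((p₁ ++ e :: p₂) ++ (p₁ ++ [e'])).getD p₁.length a = e := by
        rw [List.getD_append _ _ _ _ (by rw [hl]; exact hlen1),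
          List.getD_append_right _ _ _ _ le_rfl]
        simp
      have h2 : ((p₁ ++ e :: p₂) ++ (p₁ ++ [e'])).getD (p₁.length + d) a = e' := by
        rw [List.getD_append_right _ _ _ _ (by rw [hl]; omega)]
        rw [show p₁.length + d - (p₁ ++ e :: p₂).length = p₁.length by rw [hl]; omega]
        rw [List.getD_append_right _ _ _ _ le_rfl]
        simp
      rw [h1, h2]
      exact fun h => he'e (h.symm)
  · -- non-loop case
    obtain ⟨e, he⟩ := hns w
    refine ⟨p ++ [e], G.s e, isDPath_append hp (isDPath_singleton he), 0, by simp [hl], ?_⟩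
    intro a heq
    apply hxw
    have h1 : G.r ((p ++ [e]).getD 0 a) = x :=
      isDPath_getD_zero (isDPath_append hp (isDPath_singleton he)) (by simp) a
    have h2 : (p ++ [e]).getD (0 + d) a = e := by
      rw [List.getD_append_right _ _ _ _ (by omega)]
      simp [hl]
    rw [← h1, heq, h2, he]

theorem exists_aperiodic_path (hns : G.NoSources)
    (hap : ∀ (x : G.V) (p : List G.E), p ≠ [] → G.IsDPath x x p →
      ∃ e ∈ p, ∃ f g : G.E, f ≠ g ∧ G.r f = G.r e ∧ G.r g = G.r e)
    (x : G.V) :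
    ∃ μ : G.InfPath, G.r (μ.1 0) = x ∧
      ∀ d, 0 < d → ∀ N, ∃ j, N ≤ j ∧ μ.1 j ≠ μ.1 (j + d) := by
  obtain ⟨a0, -⟩ := hns x
  have H : ∀ (y : G.V) (t : ℕ), ∃ pw : List G.E × G.V,
      G.IsDPath y pw.2 pw.1 ∧ ∃ j, j + ((Nat.unpair t).1 + 1) < pw.1.length ∧
        ∀ a, pw.1.getD j a ≠ pw.1.getD (j + ((Nat.unpair t).1 + 1)) a := by
    intro y t
    obtain ⟨p, w, h1, j, h2, h3⟩ := exists_mismatch_block hns hap y _ (Nat.succ_pos _)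
    exact ⟨(p, w), h1, j, h2, h3⟩
  choose B hB hBj using H
  let F : ℕ → List G.E × G.V := fun n =>
    n.rec (([], x) : List G.E × G.V) (fun t acc => (acc.1 ++ (B acc.2 t).1, (B acc.2 t).2))
  have hFs : ∀ t, F (t + 1) = ((F t).1 ++ (B (F t).2 t).1, (B (F t).2 t).2) := fun t => rfl
  have hF : ∀ t, G.IsDPath x (F t).2 (F t).1 := by
    intro t
    induction t with
    | zero => exact rfl
    | succ t ih => rw [hFs t]; exact isDPath_append ih (hB _ _)
  have hblen : ∀ y t, 1 ≤ (B y t).1.length := by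
    intro y t
    obtain ⟨j, hj, -⟩ := hBj y t
    omega
  have hlen : ∀ t, t ≤ (F t).1.length := by
    intro t
    induction t with
    | zero => simp
    | succ t ih =>
      rw [hFs t]; simp
      have := hblen (F t).2 t
      omega
  have hpre : ∀ t t', t ≤ t' → (F t).1 <+: (F t').1 := by
    intro t t' h
    induction t', h using Nat.le_induction with
    | base => exact List.prefix_rfl
    | succ t' h ih =>
      refine ih.trans ?_
      rw [hFs t']
      exact List.prefix_append _ _
  have hgetpre : ∀ t t' n, t ≤ t' → n < (F t).1.length →
      (F t).1.getD n a0 = (F t').1.getD n a0 := by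
    intro t t' n h hn
    obtain ⟨r, hr⟩ := hpre t t' h
    rw [← hr, List.getD_append _ _ _ _ hn]
  let μf : ℕ → G.E := fun n => (F (n + 1)).1.getD n a0
  have hstab : ∀ t n, n < (F t).1.length → (F t).1.getD n a0 = μf n := by
    intro t n hn
    rcases le_total t (n + 1) with h | h
    · exact hgetpre t (n + 1) n h hn
    · exact (hgetpre (n + 1) t n h (lt_of_lt_of_le (Nat.lt_succ_self n) (hlen (n + 1)))).symm
  have hpath : ∀ n, G.s (μf n) = G.r (μf (n + 1)) := by
    intro n
    have h1 : n + 1 + 1 ≤ (F (n + 2)).1.length := hlen (n + 2)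
    rw [show μf n = (F (n + 2)).1.getD n a0 from (hstab (n + 2) n (by omega)).symm,
      show μf (n + 1) = (F (n + 2)).1.getD (n + 1) a0 from (hstab (n + 2) (n + 1) (by omega)).symm]
    exact isDPath_getD_succ (hF (n + 2)) (by omega) a0
  refine ⟨⟨μf, hpath⟩, ?_, ?_⟩
  · have h1 : 1 ≤ (F 1).1.length := hlen 1
    exact isDPath_getD_zero (hF 1) (by intro h; rw [h] at h1; simp at h1) a0
  · intro d hd N
    set t := Nat.pair (d - 1) N with ht
    have hdt : (Nat.unpair t).1 + 1 = d := by
      rw [ht, Nat.unpair_pair]; omega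
    have htN : N ≤ t := Nat.right_le_pair _ _
    obtain ⟨j, hj, hne⟩ := hBj (F t).2 t
    rw [hdt] at hj hne
    set o := (F t).1.length with ho
    have hto : t ≤ o := hlen t
    have hlt1 : o + j < (F (t + 1)).1.length := by
      rw [hFs t]; simp [← ho]; omega
    have hlt2 : o + j + d < (F (t + 1)).1.length := by
      rw [hFs t]; simp [← ho]; omega
    have he1 : μf (o + j) = (B (F t).2 t).1.getD j a0 := by
      rw [← hstab (t + 1) (o + j) hlt1, hFs t]
      rw [List.getD_append_right _ _ _ _ (by omega)]
      congr 1; omega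
    have he2 : μf (o + j + d) = (B (F t).2 t).1.getD (j + d) a0 := by
      rw [← hstab (t + 1) (o + j + d) hlt2, hFs t]
      rw [List.getD_append_right _ _ _ _ (by omega)]
      congr 1; omega
    refine ⟨o + j, by omega, ?_⟩
    show μf (o + j) ≠ μf (o + j + d)
    rw [he1, he2]; exact hne a0

end Stmt14Aux


open DirGraph in
/-- If `G` acts freely on the multitree `E` and the quotient graph `Γ = G\E` is aperiodic
(every loop has an entrance), then every cylinder set of `∂E` contains a point with
trivial isotropy; consequently the action `G ↷ ∂E` is topologically free. -/
theorem stmt14 (Γgrp : Type) [Group Γgrp] [Countable Γgrp] (E : DirGraph)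
    [Countable E.V] [Countable E.E]
    [MulAction Γgrp E.V] [MulAction Γgrp E.E]
    (hr : ∀ (g : Γgrp) (e : E.E), E.r (g • e) = g • E.r e)
    (hs : ∀ (g : Γgrp) (e : E.E), E.s (g • e) = g • E.s e)
    (hmt : E.IsMultitree) (hrow : E.RowFinite) (hnsrc : E.NoSources)
    (hfa : E.FinAligned)
    (hfree : ∀ (g : Γgrp) (v : E.V), g • v = v → g = 1)
    (haper : ∀ (x : (quotGraph Γgrp E hr hs).V) (p : List (quotGraph Γgrp E hr hs).E),
      p ≠ [] → (quotGraph Γgrp E hr hs).IsDPath x x p →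
        ∃ e ∈ p, ∃ f g : (quotGraph Γgrp E hr hs).E, f ≠ g ∧
          (quotGraph Γgrp E hr hs).r f = (quotGraph Γgrp E hr hs).r e ∧
          (quotGraph Γgrp E hr hs).r g = (quotGraph Γgrp E hr hs).r e) :
    (∀ v' : E.V, ∃ l : E.InfPath, E.r (l.1 0) = v' ∧
      ∀ g : Γgrp, E.actBdry hr hs g (Quot.mk E.stEquiv l) = Quot.mk E.stEquiv l → g = 1) ∧
    @Dense E.Bdry E.bdryTop
      {b | ∀ g : Γgrp, E.actBdry hr hs g b = b → g = 1} := by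
  classical
  set Γ := quotGraph Γgrp E hr hs with hGamma
  -- stEquiv is an equivalence relation
  have hequiv : Equivalence E.stEquiv := by
    constructor
    · intro l; exact ⟨0, 0, fun k => rfl⟩
    · rintro a b ⟨m, n, h⟩; exact ⟨n, m, fun k => (h k).symm⟩
    · rintro a b c ⟨m, n, h⟩ ⟨m', n', h'⟩
      refine ⟨m + (max n m' - n), n' + (max n m' - m'), fun k => ?_⟩
      have e1 : m + (max n m' - n) + k = m + ((max n m' - n) + k) := by omega
      have e2 : n + ((max n m' - n) + k) = m' + ((max n m' - m') + k) := by
        have h1 := le_max_left n m'; have h2 := le_max_right n m'; omega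
      have e3 : n' + (max n m' - m') + k = n' + ((max n m' - m') + k) := by omega
      rw [e1, h, e2, h', ← e3]
  have hquot : ∀ a b : E.InfPath, Quot.mk E.stEquiv a = Quot.mk E.stEquiv b → E.stEquiv a b :=
    fun a b h => (hequiv.eqvGen_iff).mp (Quot.eqvGen_exact h)
  -- single edge lifting
  have lift1 : ∀ (v : E.V) (ebar : Γ.E), ∃ e : E.E,
      Γ.r ebar = Quotient.mk (MulAction.orbitRel Γgrp E.V) v →
      Quotient.mk (MulAction.orbitRel Γgrp E.E) e = ebar ∧ E.r e = v := by
    intro v ebar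
    by_cases hbar : Γ.r ebar = Quotient.mk (MulAction.orbitRel Γgrp E.V) v
    · obtain ⟨e, rfl⟩ := Quotient.exists_rep ebar
      have h2 : Quotient.mk (MulAction.orbitRel Γgrp E.V) (E.r e)
          = Quotient.mk (MulAction.orbitRel Γgrp E.V) v := hbar
      have h3 : E.r e ∈ MulAction.orbit Γgrp v := Quotient.exact h2
      obtain ⟨g, hg⟩ := h3
      refine ⟨g⁻¹ • e, fun _ => ⟨Quotient.sound ?_, ?_⟩⟩
      · exact ⟨g⁻¹, rfl⟩
      · rw [hr, ← hg, inv_smul_smul]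
    · obtain ⟨e, -⟩ := Quotient.exists_rep ebar
      exact ⟨e, fun h => absurd h hbar⟩
  -- lifting of infinite paths
  have liftInf : ∀ (v' : E.V) (μ : Γ.InfPath),
      Γ.r (μ.1 0) = Quotient.mk (MulAction.orbitRel Γgrp E.V) v' →
      ∃ l : E.InfPath, E.r (l.1 0) = v' ∧
        ∀ n, Quotient.mk (MulAction.orbitRel Γgrp E.E) (l.1 n) = μ.1 n := by
    intro v' μ hμ0
    choose L hL using lift1
    let f : ℕ → E.E := fun n => n.rec (L v' (μ.1 0)) (fun n e => L (E.s e) (μ.1 (n + 1)))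
    have hfs : ∀ n, f (n + 1) = L (E.s (f n)) (μ.1 (n + 1)) := fun n => rfl
    have h0 := hL v' (μ.1 0) hμ0
    have hstep : ∀ n, Quotient.mk (MulAction.orbitRel Γgrp E.E) (f n) = μ.1 n →
        Quotient.mk (MulAction.orbitRel Γgrp E.E) (f (n + 1)) = μ.1 (n + 1) ∧
          E.r (f (n + 1)) = E.s (f n) := by
      intro n hn
      rw [hfs n]
      apply hL
      rw [← μ.2 n, ← hn]
      rfl
    have hall : ∀ n, Quotient.mk (MulAction.orbitRel Γgrp E.E) (f n) = μ.1 n := by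
      intro n; induction n with
      | zero => exact h0.1
      | succ n ih => exact (hstep n ih).1
    exact ⟨⟨f, fun n => ((hstep n (hall n)).2).symm⟩, h0.2, hall⟩
  -- quotient graph has no sources
  have hΓns : Γ.NoSources := by
    intro xq
    obtain ⟨v, rfl⟩ := Quotient.exists_rep xq
    obtain ⟨e, he⟩ := hnsrc v
    refine ⟨Quotient.mk (MulAction.orbitRel Γgrp E.E) e, ?_⟩
    show Quotient.mk (MulAction.orbitRel Γgrp E.V) (E.r e) = _
    rw [he]
  -- PART 1
  have main : ∀ v' : E.V, ∃ l : E.InfPath, E.r (l.1 0) = v' ∧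
      ∀ g : Γgrp, E.actBdry hr hs g (Quot.mk E.stEquiv l) = Quot.mk E.stEquiv l → g = 1 := by
    intro v'
    obtain ⟨μ, hμ0, hμap⟩ := Stmt14Aux.exists_aperiodic_path (G := Γ) hΓns haper
      (Quotient.mk (MulAction.orbitRel Γgrp E.V) v')
    obtain ⟨l, hl0, hlq⟩ := liftInf v' μ hμ0
    refine ⟨l, hl0, ?_⟩
    intro g hg
    obtain ⟨m, n, h⟩ := hquot (E.actInf hr hs g l) l hg
    have h' : ∀ k, g • l.1 (m + k) = l.1 (n + k) := h
    have hq : ∀ k, μ.1 (m + k) = μ.1 (n + k) := by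
      intro k
      rw [← hlq, ← hlq]
      refine Quotient.sound ⟨g⁻¹, ?_⟩
      show g⁻¹ • l.1 (n + k) = l.1 (m + k)
      rw [← h' k, inv_smul_smul]
    rcases lt_trichotomy m n with hmn | heq | hnm
    · exfalso
      obtain ⟨j, hj, hne⟩ := hμap (n - m) (by omega) m
      apply hne
      have hqq := hq (j - m)
      rw [show m + (j - m) = j by omega, show n + (j - m) = j + (n - m) by omega] at hqq
      exact hqq
    · subst heq
      exact hfree g _ (by rw [← hr, h' 0])
    · exfalso
      obtain ⟨j, hj, hne⟩ := hμap (m - n) (by omega) n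
      apply hne
      have hqq := hq (j - n)
      rw [show m + (j - n) = j + (m - n) by omega, show n + (j - n) = j by omega] at hqq
      exact hqq.symm
  refine ⟨main, ?_⟩
  -- PART 2: density
  letI : TopologicalSpace E.Bdry := E.bdryTop
  have hbasis : TopologicalSpace.IsTopologicalBasis
      ((fun f : Set (Set E.Bdry) => ⋂₀ f) '' { f : Set (Set E.Bdry) | f.Finite ∧ f ⊆ {S | ∃ v, S = E.Zb v} }) :=
    TopologicalSpace.isTopologicalBasis_of_subbasis rfl
  rw [hbasis.dense_iff]
  rintro o ⟨fs, ⟨hfin, hsub⟩, rfl⟩ ⟨x, hx⟩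
  obtain ⟨l, rfl⟩ := Quot.exists_rep x
  have hdata : ∀ S : {S // S ∈ fs}, ∃ (nS : ℕ) (v : E.V) (lS : E.InfPath) (mS : ℕ),
      E.r (lS.1 0) = v ∧ S.1 = E.Zb v ∧ ∀ k, lS.1 (mS + k) = l.1 (nS + k) := by
    rintro ⟨S, hS⟩
    obtain ⟨v, rfl⟩ := hsub hS
    have hxS : Quot.mk E.stEquiv l ∈ E.Zb v := Set.mem_sInter.1 hx _ hS
    obtain ⟨lS, hr0, heq⟩ := hxS
    obtain ⟨mS, nS, hk⟩ := hquot _ _ heq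
    exact ⟨nS, v, lS, mS, hr0, rfl, hk⟩
  choose nf vf lf mf hrf hSf hkf using hdata
  haveI : Finite {S // S ∈ fs} := hfin.to_subtype
  obtain ⟨N0, hN0⟩ := Finite.exists_le nf
  set N := N0 + 1 with hN
  obtain ⟨l', hl'0, hl'iso⟩ := main (E.r (l.1 N))
  -- splice l (up to N) with l'
  let f2 : ℕ → E.E := fun k => if k < N then l.1 k else l'.1 (k - N)
  have hf2lt : ∀ k, k < N → f2 k = l.1 k := fun k hk => if_pos hk
  have hf2ge : ∀ k, ¬ k < N → f2 k = l'.1 (k - N) := fun k hk => if_neg hk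
  have hf2path : ∀ k, E.s (f2 k) = E.r (f2 (k + 1)) := by
    intro k
    by_cases h1 : k + 1 < N
    · rw [hf2lt _ (by omega), hf2lt _ h1]; exact l.2 k
    · by_cases h2 : k < N
      · rw [hf2lt _ h2, hf2ge _ h1, show k + 1 - N = 0 by omega, hl'0,
          show N = k + 1 by omega]
        exact l.2 k
      · rw [hf2ge _ h2, hf2ge _ h1, show k + 1 - N = (k - N) + 1 by omega]
        exact l'.2 (k - N)
  have h2eq : Quot.mk E.stEquiv (⟨f2, hf2path⟩ : E.InfPath) = Quot.mk E.stEquiv l' := by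
    apply Quot.sound
    refine ⟨N, 0, fun k => ?_⟩
    show f2 (N + k) = l'.1 (0 + k)
    rw [hf2ge _ (by omega), show N + k - N = k by omega, Nat.zero_add]
  refine ⟨Quot.mk E.stEquiv (⟨f2, hf2path⟩ : E.InfPath), Set.mem_sInter.2 ?_, ?_⟩
  · intro S hS
    rw [show S = E.Zb (vf ⟨S, hS⟩) from hSf ⟨S, hS⟩]
    have hnS : nf ⟨S, hS⟩ < N := by have := hN0 ⟨S, hS⟩; omega
    set ms := mf ⟨S, hS⟩ with hms
    set ns := nf ⟨S, hS⟩ with hns2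
    let f3 : ℕ → E.E := fun k => if k < ms then (lf ⟨S, hS⟩).1 k else f2 (ns + (k - ms))
    have hf3lt : ∀ k, k < ms → f3 k = (lf ⟨S, hS⟩).1 k := fun k hk => if_pos hk
    have hf3ge : ∀ k, ¬ k < ms → f3 k = f2 (ns + (k - ms)) := fun k hk => if_neg hk
    have hf3path : ∀ k, E.s (f3 k) = E.r (f3 (k + 1)) := by
      intro k
      by_cases h1 : k + 1 < ms
      · rw [hf3lt _ (by omega), hf3lt _ h1]; exact (lf ⟨S, hS⟩).2 k
      · by_cases h2 : k < ms
        · have e1 : f3 (k + 1) = l.1 ns := by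
            rw [hf3ge _ h1, show ns + (k + 1 - ms) = ns by omega, hf2lt _ hnS]
          have e2 : (lf ⟨S, hS⟩).1 (k + 1) = l.1 ns := by
            have hk0 := hkf ⟨S, hS⟩ 0
            rw [Nat.add_zero, Nat.add_zero] at hk0
            rw [show k + 1 = ms by omega]
            exact hk0
          rw [hf3lt _ h2, (lf ⟨S, hS⟩).2 k, e2, e1]
        · rw [hf3ge _ h2, hf3ge _ h1,
            show ns + (k + 1 - ms) = (ns + (k - ms)) + 1 by omega]
          exact hf2path _
    have hr3 : E.r (f3 0) = vf ⟨S, hS⟩ := by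
      by_cases h0 : 0 < ms
      · rw [hf3lt 0 h0]; exact hrf ⟨S, hS⟩
      · have hk0 := hkf ⟨S, hS⟩ 0
        rw [Nat.add_zero, Nat.add_zero] at hk0
        rw [hf3ge 0 (by omega), show ns + (0 - ms) = ns by omega, hf2lt _ hnS,
          ← hk0, show mf ⟨S, hS⟩ = 0 by rw [← hms]; omega]
        exact hrf ⟨S, hS⟩
    refine ⟨⟨f3, hf3path⟩, hr3, Quot.sound ⟨ms, ns, fun k => ?_⟩⟩
    show f3 (ms + k) = f2 (ns + k)
    rw [hf3ge _ (by omega), show ms + k - ms = k by omega]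
  · intro g hg
    rw [h2eq] at hg
    exact hl'iso g hg
end

section
/- Suppose a discrete group G acts freely on a row-finite, finitely aligned multitree E with no sources, and the quotient graph Γ = G\E contains a loop η with no entrance. Then there is a vertex v′ ∈ E^0 such that the cylinder set Z_∂(v′) ⊆ ∂E is a singleton {[λ′]} and [λ′] has nontrivial isotropy; consequently the action G ↷ ∂E is not topologically free (assuming G is nontrivial). -/
/-!
Call a set `S` of vertices entrance-free if every edge ending in `S` is the only edge with its
range and starts in `S` again. The vertices of the loop `η` form such a set in `G\E`, and since `G`
acts freely, so does their preimage in `E`. Along an entrance-free set an infinite path is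
determined by its range, so for `v'` over `η` the cylinder `Z_∂(v')` is one point `[λ']`. Going
once around `η`, `λ'` leads from `v'` to a vertex `g • v'`; a multitree has no cycles, so `g ≠ 1`,
and `g • λ'` and the tail of `λ'` starting at `g • v'` coincide, so `g` fixes `[λ']`. The open set
`Z_∂(v')` then contains no point with trivial isotropy.
-/

namespace DirGraph

variable {G : DirGraph}

structure HasNoEntrance (G : DirGraph) (S : Set G.V) : Prop where
  s_mem : ∀ e, G.r e ∈ S → G.s e ∈ S
  eq_of_r_eq : ∀ e f, G.r e ∈ S → G.r f = G.r e → f = e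

theorem IsDPath.exists_mem_r_eq {v w : G.V} {p : List G.E} (h : G.IsDPath v w p)
    (hp : p ≠ []) : ∃ e ∈ p, G.r e = v := by
  obtain ⟨e, q, rfl⟩ := List.exists_cons_of_ne_nil hp
  exact ⟨e, List.mem_cons_self, h.1⟩

theorem IsDPath.s_eq_or_exists_r_eq {v w : G.V} {p : List G.E} (h : G.IsDPath v w p)
    {e : G.E} (he : e ∈ p) : G.s e = w ∨ ∃ e' ∈ p, G.r e' = G.s e := by
  induction p generalizing v with
  | nil => simp at he
  | cons f q ih =>
    obtain ⟨-, hq⟩ := h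
    rcases List.mem_cons.mp he with rfl | he
    · rcases q with _ | ⟨f', q⟩
      · exact Or.inl hq
      · exact Or.inr ⟨f', List.mem_cons_of_mem _ List.mem_cons_self, hq.1⟩
    · exact (ih hq he).imp_right fun ⟨e', he', h'⟩ => ⟨e', List.mem_cons_of_mem _ he', h'⟩

theorem IsDPath.exists_r_eq_s_of_loop {x : G.V} {p : List G.E} (h : G.IsDPath x x p)
    {e : G.E} (he : e ∈ p) : ∃ e' ∈ p, G.r e' = G.s e := by
  rcases h.s_eq_or_exists_r_eq he with hx | h'
  · rw [hx]
    exact h.exists_mem_r_eq (List.ne_nil_of_mem he)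
  · exact h'

theorem hasNoEntrance_loop {x : G.V} {p : List G.E} (hp : G.IsDPath x x p)
    (hent : ∀ e ∈ p, ∀ f g : G.E, G.r f = G.r e → G.r g = G.r e → f = g) :
    G.HasNoEntrance (G.r '' {e | e ∈ p}) where
  s_mem := by
    rintro e ⟨e₀, he₀, hre⟩
    obtain rfl := hent e₀ he₀ e e₀ hre.symm rfl
    exact hp.exists_r_eq_s_of_loop he₀
  eq_of_r_eq := by
    rintro e f ⟨e₀, he₀, hre⟩ hrf
    exact hent e₀ he₀ f e (hrf.trans hre.symm) hre.symm

namespace InfPath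

def shift (l : G.InfPath) (d : ℕ) : G.InfPath :=
  ⟨fun k => l.1 (d + k), fun k => l.2 (d + k)⟩

theorem mk_shift (l : G.InfPath) (d : ℕ) :
    Quot.mk G.stEquiv (l.shift d) = Quot.mk G.stEquiv l :=
  Quot.sound ⟨0, d, fun k => by rw [Nat.zero_add]; rfl⟩

theorem isDPath_map_range' (l : G.InfPath) (n k : ℕ) :
    G.IsDPath (G.r (l.1 n)) (G.r (l.1 (n + k))) ((List.range' n k).map l.1) := by
  induction k generalizing n with
  | zero => rfl
  | succ k ih =>
    refine ⟨rfl, ?_⟩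
    rw [l.2 n, show n + (k + 1) = n + 1 + k by omega]
    exact ih (n + 1)

end InfPath

theorem IsMultitree.r_ne_r_add (hmt : G.IsMultitree) (l : G.InfPath) (n : ℕ) {k : ℕ}
    (hk : k ≠ 0) : G.r (l.1 n) ≠ G.r (l.1 (n + k)) := by
  intro h
  have hcycle := l.isDPath_map_range' n k
  rw [← h] at hcycle
  have := hmt _ _ _ [] hcycle rfl
  simp [hk] at this

theorem NoSources.exists_infPath (h : G.NoSources) (v : G.V) :
    ∃ l : G.InfPath, G.r (l.1 0) = v := by
  choose e he using h
  let w : ℕ → G.V := fun n => (fun u => G.s (e u))^[n] v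
  refine ⟨⟨fun n => e (w n), fun n => ?_⟩, he v⟩
  rw [he]
  exact (Function.iterate_succ_apply' (fun u => G.s (e u)) n v).symm

namespace HasNoEntrance

variable {S : Set G.V}

theorem r_mem (hS : G.HasNoEntrance S) (l : G.InfPath) (h0 : G.r (l.1 0) ∈ S) (n : ℕ) :
    G.r (l.1 n) ∈ S := by
  induction n with
  | zero => exact h0
  | succ n ih => rw [← l.2 n]; exact hS.s_mem _ ih

theorem infPath_eq (hS : G.HasNoEntrance S) {l m : G.InfPath}
    (h0 : G.r (m.1 0) = G.r (l.1 0)) (hl : G.r (l.1 0) ∈ S) : m = l := by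
  have hr : ∀ n, G.r (m.1 n) = G.r (l.1 n) := by
    intro n
    induction n with
    | zero => exact h0
    | succ n ih => rw [← l.2 n, ← m.2 n, hS.eq_of_r_eq _ _ (hS.r_mem l hl n) ih]
  exact Subtype.ext (funext fun n => hS.eq_of_r_eq _ _ (hS.r_mem l hl n) (hr n))

theorem zb_eq_singleton (hS : G.HasNoEntrance S) {l : G.InfPath} (hl : G.r (l.1 0) ∈ S) :
    G.Zb (G.r (l.1 0)) = {Quot.mk G.stEquiv l} := by
  ext b
  constructor
  · rintro ⟨m, hm, rfl⟩
    rw [hS.infPath_eq hm hl]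
    rfl
  · rintro rfl
    exact ⟨l, rfl, rfl⟩

theorem r_add_length (hS : G.HasNoEntrance S) (m : G.InfPath) {n : ℕ} (hn : G.r (m.1 n) ∈ S)
    {w : G.V} {q : List G.E} (hq : G.IsDPath (G.r (m.1 n)) w q) :
    G.r (m.1 (n + q.length)) = w := by
  induction q generalizing n with
  | nil => exact hq
  | cons e q ih =>
    obtain ⟨he, hq⟩ := hq
    obtain rfl := hS.eq_of_r_eq _ _ hn he
    rw [m.2 n] at hq
    rw [List.length_cons, show n + (q.length + 1) = n + 1 + q.length by omega]
    exact ih (m.2 n ▸ hS.s_mem _ hn) hq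

end HasNoEntrance

theorem isOpen_zb (v : G.V) : @IsOpen G.Bdry G.bdryTop (G.Zb v) :=
  TopologicalSpace.isOpen_generateFrom_of_mem ⟨v, rfl⟩

theorem not_dense_of_zb_eq_singleton {α : Type} [One α] {f : α → G.Bdry → G.Bdry} {v : G.V}
    {b : G.Bdry} (hZ : G.Zb v = {b}) {a : α} (hfix : f a b = b) (ha : a ≠ 1) :
    ¬ @Dense G.Bdry G.bdryTop {c | ∀ a, f a c = c → a = 1} := by
  let _ := G.bdryTop
  intro hdense
  obtain ⟨c, hc, hcZ⟩ := hdense.exists_mem_open (isOpen_zb v) (hZ ▸ Set.singleton_nonempty b)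
  rw [hZ, Set.mem_singleton_iff] at hcZ
  exact ha (hc a (hcZ ▸ hfix))

section Action

variable {Γ : Type} [Group Γ] {E : DirGraph} [MulAction Γ E.V] [MulAction Γ E.E]
  {hr : ∀ (g : Γ) (e : E.E), E.r (g • e) = g • E.r e}
  {hs : ∀ (g : Γ) (e : E.E), E.s (g • e) = g • E.s e}

theorem hasNoEntrance_preimage (hfree : ∀ (g : Γ) (v : E.V), g • v = v → g = 1)
    {S : Set (quotGraph Γ E hr hs).V} (hS : (quotGraph Γ E hr hs).HasNoEntrance S) :
    E.HasNoEntrance (Quotient.mk _ ⁻¹' S) where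
  s_mem e he := hS.s_mem (Quotient.mk _ e) he
  eq_of_r_eq e f he hrf := by
    have horbit : Quotient.mk (MulAction.orbitRel Γ E.E) f = Quotient.mk _ e :=
      hS.eq_of_r_eq _ _ he (congrArg (Quotient.mk _) hrf)
    obtain ⟨g, rfl⟩ := Quotient.exact horbit
    have hg : g • E.r e = E.r e := by rw [← hr, hrf]
    rw [hfree g _ hg]
    exact one_smul Γ e

theorem exists_smul_r_eq_r_length {S : Set (quotGraph Γ E hr hs).V}
    (hS : (quotGraph Γ E hr hs).HasNoEntrance S) {x : (quotGraph Γ E hr hs).V} (hx : x ∈ S)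
    {p : List (quotGraph Γ E hr hs).E} (hp : (quotGraph Γ E hr hs).IsDPath x x p)
    (l : E.InfPath) (hl : Quotient.mk _ (E.r (l.1 0)) = x) :
    ∃ g : Γ, g • E.r (l.1 0) = E.r (l.1 p.length) := by
  subst hl
  let m : (quotGraph Γ E hr hs).InfPath :=
    ⟨fun n => Quotient.mk _ (l.1 n), fun n => congrArg (Quotient.mk _) (l.2 n)⟩
  have hm : Quotient.mk _ (E.r (l.1 (0 + p.length))) = Quotient.mk _ (E.r (l.1 0)) :=
    hS.r_add_length m (n := 0) hx hp
  rw [Nat.zero_add] at hm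
  exact Quotient.exact hm

theorem HasNoEntrance.actBdry_mk_eq {S : Set E.V} (hS : E.HasNoEntrance S) {l : E.InfPath}
    (hl : E.r (l.1 0) ∈ S) {g : Γ} {d : ℕ} (hg : g • E.r (l.1 0) = E.r (l.1 d)) :
    E.actBdry hr hs g (Quot.mk E.stEquiv l) = Quot.mk E.stEquiv l := by
  have hgl : E.actInf hr hs g l = l.shift d :=
    hS.infPath_eq ((hr g _).trans hg) (hS.r_mem l hl (d + 0))
  change Quot.mk E.stEquiv (E.actInf hr hs g l) = Quot.mk E.stEquiv l
  rw [hgl, l.mk_shift]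

end Action

end DirGraph

open DirGraph in
theorem stmt15_general (Γgrp : Type) [Group Γgrp]
    (E : DirGraph) [MulAction Γgrp E.V] [MulAction Γgrp E.E]
    (hr : ∀ (g : Γgrp) (e : E.E), E.r (g • e) = g • E.r e)
    (hs : ∀ (g : Γgrp) (e : E.E), E.s (g • e) = g • E.s e)
    (hmt : E.IsMultitree) (hnsrc : E.NoSources)
    (hfree : ∀ (g : Γgrp) (v : E.V), g • v = v → g = 1)
    (hloop : ∃ (x : (quotGraph Γgrp E hr hs).V) (p : List (quotGraph Γgrp E hr hs).E),
      p ≠ [] ∧ (quotGraph Γgrp E hr hs).IsDPath x x p ∧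
        ∀ e ∈ p, ∀ f g : (quotGraph Γgrp E hr hs).E,
          (quotGraph Γgrp E hr hs).r f = (quotGraph Γgrp E hr hs).r e →
          (quotGraph Γgrp E hr hs).r g = (quotGraph Γgrp E hr hs).r e → f = g) :
    (∃ (v' : E.V) (l : E.InfPath), E.r (l.1 0) = v' ∧
      E.Zb v' = {Quot.mk E.stEquiv l} ∧
      ∃ g : Γgrp, g ≠ 1 ∧
        E.actBdry hr hs g (Quot.mk E.stEquiv l) = Quot.mk E.stEquiv l) ∧
    ¬ @Dense E.Bdry E.bdryTop
        {b | ∀ g : Γgrp, E.actBdry hr hs g b = b → g = 1} := by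
  obtain ⟨x, p, hpne, hp, hent⟩ := hloop
  have hloopNoEntrance := hasNoEntrance_loop hp hent
  have hliftNoEntrance := hasNoEntrance_preimage hfree hloopNoEntrance
  have hx : x ∈ (quotGraph Γgrp E hr hs).r '' {e | e ∈ p} := hp.exists_mem_r_eq hpne
  obtain ⟨v', rfl⟩ := Quotient.exists_rep x
  obtain ⟨l, rfl⟩ := hnsrc.exists_infPath v'
  have hZ := hliftNoEntrance.zb_eq_singleton (l := l) hx
  obtain ⟨g, hg⟩ := exists_smul_r_eq_r_length hloopNoEntrance hx hp l rfl
  have hg1 : g ≠ 1 := by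
    rintro rfl
    exact hmt.r_ne_r_add l 0 (List.length_pos_iff.mpr hpne).ne' (by simpa using hg)
  have hfix := hliftNoEntrance.actBdry_mk_eq (hr := hr) (hs := hs) hx hg
  exact ⟨⟨_, l, rfl, hZ, g, hg1, hfix⟩, not_dense_of_zb_eq_singleton hZ hfix hg1⟩

open DirGraph in
/-- If `G` (nontrivial) acts freely on the multitree `E` and the quotient graph
`Γ = G\E` has a loop with no entrance, then some cylinder set `Z_∂(v')` of `∂E` is a
singleton `{[λ']}` whose point has nontrivial isotropy; consequently `G ↷ ∂E` is not
topologically free. -/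
theorem stmt15 (Γgrp : Type) [Group Γgrp] [Countable Γgrp] [Nontrivial Γgrp]
    (E : DirGraph) [Countable E.V] [Countable E.E]
    [MulAction Γgrp E.V] [MulAction Γgrp E.E]
    (hr : ∀ (g : Γgrp) (e : E.E), E.r (g • e) = g • E.r e)
    (hs : ∀ (g : Γgrp) (e : E.E), E.s (g • e) = g • E.s e)
    (hmt : E.IsMultitree) (hrow : E.RowFinite) (hnsrc : E.NoSources)
    (hfa : E.FinAligned)
    (hfree : ∀ (g : Γgrp) (v : E.V), g • v = v → g = 1)
    (hloop : ∃ (x : (quotGraph Γgrp E hr hs).V) (p : List (quotGraph Γgrp E hr hs).E),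
      p ≠ [] ∧ (quotGraph Γgrp E hr hs).IsDPath x x p ∧
        ∀ e ∈ p, ∀ f g : (quotGraph Γgrp E hr hs).E,
          (quotGraph Γgrp E hr hs).r f = (quotGraph Γgrp E hr hs).r e →
          (quotGraph Γgrp E hr hs).r g = (quotGraph Γgrp E hr hs).r e → f = g) :
    (∃ (v' : E.V) (l : E.InfPath), E.r (l.1 0) = v' ∧
      E.Zb v' = {Quot.mk E.stEquiv l} ∧
      ∃ g : Γgrp, g ≠ 1 ∧
        E.actBdry hr hs g (Quot.mk E.stEquiv l) = Quot.mk E.stEquiv l) ∧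
    ¬ @Dense E.Bdry E.bdryTop
        {b | ∀ g : Γgrp, E.actBdry hr hs g b = b → g = 1} :=
  stmt15_general Γgrp E hr hs hmt hnsrc hfree hloop
end

section
/- Suppose a discrete group G acts on a row-finite, finitely aligned multitree E with no sources, with all vertex stabilisers infinite cyclic. For a finite path α = e_1⋯e_n in Γ = G\E and any lift α′ in E, an element m·1_{r(α′)} of the stabiliser G_{r(α′)} ≅ ℤ fixes α′ if and only if ⟨q(α_{k−1})/ω_{e_k}⟩ divides m for all 1 ≤ k ≤ n, where ⟨·⟩ denotes the least positive denominator of a rational number. Moreover, in that case m·q(α) is an integer and m·1_{r(α′)} = ±(m·q(α))·1_{s(α′)}. -/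
/-- The signed index ratio `q(α) = ∏ ω_{ē_i}/ω_{e_i}` of a finite path. -/
def qratio {E : DirGraph} (ω ωb : E.E → ℤ) (p : List E.E) : ℚ :=
  (p.map fun e => (ωb e : ℚ) / (ω e : ℚ)).prod

theorem Rat.den_dvd_iff_den_intCast_mul_eq_one (x : ℚ) (m : ℤ) :
    (x.den : ℤ) ∣ m ↔ ((m : ℚ) * x).den = 1 := by
  have hx : (m : ℚ) * x = ((m * x.num : ℤ) : ℚ) / ((x.den : ℤ) : ℚ) := by
    rw [Int.cast_mul, mul_div_assoc, Int.cast_natCast, Rat.num_div_den]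
  rw [hx, Rat.den_div_intCast_eq_one_iff _ _ (by exact_mod_cast x.den_ne_zero)]
  exact ⟨fun h => dvd_mul_of_dvd_left h _, x.isCoprime_num_den.symm.dvd_of_dvd_mul_right⟩

theorem exists_ne_zero_zpow_smul_eq_self_of_finite {G X : Type*} [Group G] [MulAction G X]
    {S : Set X} (hS : S.Finite) (c : G) {x : X} (hx : ∀ n : ℤ, c ^ n • x ∈ S) :
    ∃ n : ℤ, n ≠ 0 ∧ c ^ n • x = x := by
  have := hS.to_subtype
  obtain ⟨a, b, hab, h⟩ :=
    Finite.exists_ne_map_eq_of_infinite fun n : ℤ => (⟨c ^ n • x, hx n⟩ : S)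
  have hab' : c ^ a • x = c ^ b • x := congrArg Subtype.val h
  refine ⟨-b + a, by omega, ?_⟩
  rw [zpow_add, mul_smul, hab', ← mul_smul, ← zpow_add, neg_add_cancel,
    zpow_zero, one_smul]

theorem zpow_smul_eq_self_iff_dvd {G X : Type*} [Group G] [MulAction G X] {c : G}
    (hc : ¬IsOfFinOrder c) {x : X} {n : ℤ}
    (hx : MulAction.stabilizer G x = Subgroup.zpowers (c ^ n)) (m : ℤ) :
    c ^ m • x = x ↔ n ∣ m := by
  rw [← MulAction.mem_stabilizer_iff, hx, Subgroup.mem_zpowers_iff]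
  simp only [← zpow_mul, (injective_zpow_iff_not_isOfFinOrder.mpr hc).eq_iff]
  exact exists_congr fun _ => eq_comm

@[simp]
theorem qratio_nil {E : DirGraph} (ω ωb : E.E → ℤ) : qratio ω ωb [] = 1 := rfl

theorem qratio_cons {E : DirGraph} (ω ωb : E.E → ℤ) (e : E.E) (p : List E.E) :
    qratio ω ωb (e :: p) = ((ωb e : ℚ) / (ω e : ℚ)) * qratio ω ωb p := by
  simp [qratio]

theorem intCast_mul_qratio_cons {E : DirGraph} {ω : E.E → ℤ} (ωb : E.E → ℤ) {e : E.E}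
    (he : ω e ≠ 0) (t : ℤ) (p : List E.E) :
    ((ω e * t : ℤ) : ℚ) * qratio ω ωb (e :: p) = ((ωb e * t : ℤ) : ℚ) * qratio ω ωb p := by
  rw [qratio_cons]
  push_cast
  field_simp

namespace DirGraph

variable {Γgrp : Type} [Group Γgrp] {E : DirGraph}
  {gen : E.V → Γgrp} {genE : E.E → Γgrp} {ω ωb : E.E → ℤ}

theorem gen_range_zpow_eq (hω : ∀ e, genE e = gen (E.r e) ^ (ω e))
    (hωb : ∀ e, genE e = gen (E.s e) ^ (ωb e)) (e : E.E) (t : ℤ) :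
    gen (E.r e) ^ (ω e * t) = gen (E.s e) ^ (ωb e * t) := by
  rw [zpow_mul, zpow_mul, ← hω, ← hωb]

variable [MulAction Γgrp E.E]

theorem zpow_smul_edge_eq_self_iff (hgeninf : ∀ v, ¬IsOfFinOrder (gen v))
    (hgenE : ∀ e, Subgroup.zpowers (genE e) = MulAction.stabilizer Γgrp e)
    (hω : ∀ e, genE e = gen (E.r e) ^ (ω e)) (e : E.E) (m : ℤ) :
    gen (E.r e) ^ m • e = e ↔ ω e ∣ m :=
  zpow_smul_eq_self_iff_dvd (hgeninf _) (by rw [← hgenE, hω]) m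

theorem zpow_smul_path_eq_self_iff (hgeninf : ∀ v, ¬IsOfFinOrder (gen v))
    (hgenE : ∀ e, Subgroup.zpowers (genE e) = MulAction.stabilizer Γgrp e)
    (hω : ∀ e, genE e = gen (E.r e) ^ (ω e)) (hωb : ∀ e, genE e = gen (E.s e) ^ (ωb e))
    (hω0 : ∀ e, ω e ≠ 0) {v w : E.V} {p : List E.E} (hp : E.IsDPath v w p) (m : ℤ) :
    (∀ e ∈ p, gen v ^ m • e = e) ↔
      ∀ k : Fin p.length, ((m : ℚ) * (qratio ω ωb (p.take k) / ω (p.get k))).den = 1 := by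
  induction p generalizing v m with
  | nil => simp
  | cons e p ih =>
    obtain ⟨rfl, hp⟩ := hp
    refine List.forall_mem_cons.trans (Iff.trans ?_ Fin.forall_fin_succ.symm)
    have h0 : ((m : ℚ) * (qratio ω ωb [] / ω e)).den = 1 ↔ ω e ∣ m := by
      rw [qratio_nil, mul_one_div, Rat.den_div_intCast_eq_one_iff _ _ (hω0 e)]
    rw [zpow_smul_edge_eq_self_iff hgeninf hgenE hω e m]
    refine (and_congr_right fun hdvd => ?_).trans (and_congr_left' h0.symm)
    obtain ⟨t, rfl⟩ := hdvd
    rw [gen_range_zpow_eq hω hωb, ih hp]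
    refine forall_congr' fun k => ?_
    rw [Fin.val_succ, List.take_succ_cons, ← mul_div_assoc, ← mul_div_assoc,
      intCast_mul_qratio_cons ωb (hω0 e)]
    rfl

theorem exists_zpow_eq_of_zpow_smul_path_eq_self (hgeninf : ∀ v, ¬IsOfFinOrder (gen v))
    (hgenE : ∀ e, Subgroup.zpowers (genE e) = MulAction.stabilizer Γgrp e)
    (hω : ∀ e, genE e = gen (E.r e) ^ (ω e)) (hωb : ∀ e, genE e = gen (E.s e) ^ (ωb e))
    (hω0 : ∀ e, ω e ≠ 0) {v w : E.V} {p : List E.E} (hp : E.IsDPath v w p) {m : ℤ}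
    (hfix : ∀ e ∈ p, gen v ^ m • e = e) :
    ∃ z : ℤ, (z : ℚ) = m * qratio ω ωb p ∧ gen v ^ m = gen w ^ z := by
  induction p generalizing v m with
  | nil => exact ⟨m, by simp, by rw [hp]⟩
  | cons e p ih =>
    obtain ⟨rfl, hp⟩ := hp
    obtain ⟨hfe, hfp⟩ := List.forall_mem_cons.mp hfix
    obtain ⟨t, rfl⟩ := (zpow_smul_edge_eq_self_iff hgeninf hgenE hω e m).mp hfe
    rw [gen_range_zpow_eq hω hωb] at hfp ⊢
    obtain ⟨z, hz, heq⟩ := ih hp hfp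
    exact ⟨z, by rw [hz, intCast_mul_qratio_cons ωb (hω0 e)], heq⟩

variable [MulAction Γgrp E.V]

theorem index_ne_zero_of_rowFinite (hr : ∀ (g : Γgrp) (e : E.E), E.r (g • e) = g • E.r e)
    (hrow : E.RowFinite)
    (hgen : ∀ v, Subgroup.zpowers (gen v) = MulAction.stabilizer Γgrp v)
    (hgeninf : ∀ v, ¬IsOfFinOrder (gen v))
    (hgenE : ∀ e, Subgroup.zpowers (genE e) = MulAction.stabilizer Γgrp e)
    (hω : ∀ e, genE e = gen (E.r e) ^ (ω e)) (e : E.E) : ω e ≠ 0 := by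
  have hfix (n : ℤ) : gen (E.r e) ^ n • E.r e = E.r e := by
    rw [← MulAction.mem_stabilizer_iff, ← hgen]
    exact Subgroup.zpow_mem_zpowers _ n
  obtain ⟨n, hn, hne⟩ := exists_ne_zero_zpow_smul_eq_self_of_finite (hrow (E.r e))
    (gen (E.r e)) (x := e) fun n => by simp only [Set.mem_ofPred_eq, hr, hfix]
  rintro h0
  rw [zpow_smul_edge_eq_self_iff hgeninf hgenE hω, h0, zero_dvd_iff] at hne
  exact hn hne

end DirGraph

open DirGraph in
theorem stmt16_general (Γgrp : Type) [Group Γgrp]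
    (E : DirGraph)
    [MulAction Γgrp E.V] [MulAction Γgrp E.E]
    (hr : ∀ (g : Γgrp) (e : E.E), E.r (g • e) = g • E.r e)
    (hrow : E.RowFinite)
    (gen : E.V → Γgrp)
    (hgen : ∀ v, Subgroup.zpowers (gen v) = MulAction.stabilizer Γgrp v)
    (hgeninf : ∀ v, ¬ IsOfFinOrder (gen v))
    (genE : E.E → Γgrp)
    (hgenE : ∀ e, Subgroup.zpowers (genE e) = MulAction.stabilizer Γgrp e)
    (ω ωb : E.E → ℤ)
    (hω : ∀ e, genE e = gen (E.r e) ^ (ω e))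
    (hωb : ∀ e, genE e = gen (E.s e) ^ (ωb e))
    (v w : E.V) (p : List E.E) (hp : E.IsDPath v w p) (m : ℤ) :
    ((∀ e ∈ p, (gen v ^ m) • e = e) ↔
      ∀ k : Fin p.length,
        (((qratio ω ωb (p.take (k : ℕ)) / (ω (p.get k) : ℚ)).den : ℤ) ∣ m)) ∧
    ((∀ e ∈ p, (gen v ^ m) • e = e) →
      ((m : ℚ) * qratio ω ωb p).den = 1 ∧
        (gen v ^ m = gen w ^ (((m : ℚ) * qratio ω ωb p).num) ∨
          gen v ^ m = gen w ^ (-((m : ℚ) * qratio ω ωb p).num))) := by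
  have hω0 := index_ne_zero_of_rowFinite hr hrow hgen hgeninf hgenE hω
  refine ⟨?_, fun hfix => ?_⟩
  · rw [zpow_smul_path_eq_self_iff hgeninf hgenE hω hωb hω0 hp]
    simp only [Rat.den_dvd_iff_den_intCast_mul_eq_one]
  · obtain ⟨z, hz, heq⟩ :=
      exists_zpow_eq_of_zpow_smul_path_eq_self hgeninf hgenE hω hωb hω0 hp hfix
    rw [← hz, Rat.den_intCast, Rat.num_intCast]
    exact ⟨rfl, Or.inl heq⟩

open DirGraph in
/-- With all vertex stabilisers infinite cyclic (with chosen generators `gen`), edge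
stabilisers generated by `genE`, and `ω, ω̄` recording the embeddings of the edge
stabilisers into range- and source-vertex stabilisers: an element `gen (r α')^m` fixes
the path `α'` iff `⟨q(α'_{k-1})/ω_{e_k}⟩ ∣ m` for all `k`, and in that case `m·q(α')`
is an integer and `gen (r α')^m = gen (s α')^{±m·q(α')}`. -/
theorem stmt16 (Γgrp : Type) [Group Γgrp] [Countable Γgrp]
    (E : DirGraph) [Countable E.V] [Countable E.E]
    [MulAction Γgrp E.V] [MulAction Γgrp E.E]
    (hr : ∀ (g : Γgrp) (e : E.E), E.r (g • e) = g • E.r e)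
    (hs : ∀ (g : Γgrp) (e : E.E), E.s (g • e) = g • E.s e)
    (hmt : E.IsMultitree) (hrow : E.RowFinite) (hnsrc : E.NoSources)
    (hfa : E.FinAligned)
    (gen : E.V → Γgrp)
    (hgen : ∀ v, Subgroup.zpowers (gen v) = MulAction.stabilizer Γgrp v)
    (hgeninf : ∀ v, ¬ IsOfFinOrder (gen v))
    (genE : E.E → Γgrp)
    (hgenE : ∀ e, Subgroup.zpowers (genE e) = MulAction.stabilizer Γgrp e)
    (ω ωb : E.E → ℤ)
    (hω : ∀ e, genE e = gen (E.r e) ^ (ω e))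
    (hωb : ∀ e, genE e = gen (E.s e) ^ (ωb e))
    (v w : E.V) (p : List E.E) (hp : E.IsDPath v w p) (m : ℤ) :
    ((∀ e ∈ p, (gen v ^ m) • e = e) ↔
      ∀ k : Fin p.length,
        (((qratio ω ωb (p.take (k : ℕ)) / (ω (p.get k) : ℚ)).den : ℤ) ∣ m)) ∧
    ((∀ e ∈ p, (gen v ^ m) • e = e) →
      ((m : ℚ) * qratio ω ωb p).den = 1 ∧
        (gen v ^ m = gen w ^ (((m : ℚ) * qratio ω ωb p).num) ∨
          gen v ^ m = gen w ^ (-((m : ℚ) * qratio ω ωb p).num))) :=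
  stmt16_general Γgrp E hr hrow gen hgen hgeninf genE hgenE ω ωb hω hωb v w p hp m
end
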